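/- arXiv:2207.00618 — 7 statements merged into one kernel-verified Lean document; each statement's English description precedes it below -/
import Mathlib

section
/- Suppose X = (X_n)_{n≥0} satisfies assumptions (A1) and (A4). Then the process X_n · 1{N_T < ∞} possesses a finite limit almost everywhere as n → ∞. -/
open MeasureTheory Filter Topology
open scoped Classical

/-- A crossing at time `n ≥ 1`: the process changes sign, changes from zero to a
nonzero value, or changes from a nonzero value to zero. -/
def Crossing {Ω : Type*} (X : ℕ → Ω → ℝ) (n : ℕ) (ω : Ω) : Prop :=
  (0 < X n ω ∧ X (n - 1) ω ≤ 0) ∨ (X n ω < 0 ∧ 0 ≤ X (n - 1) ω) ∨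
    (X n ω = 0 ∧ X (n - 1) ω ≠ 0)

lemma seq_conv (x e α : ℕ → ℝ) (hα0 : ∀ n, 0 ≤ α n) (hαsum : Summable α)
    (L : ℝ) (hS : Tendsto (fun n => ∑ i ∈ Finset.Icc 1 n, e i) atTop (𝓝 L))
    (N : ℕ) (hpos : ∀ k, N ≤ k → 0 < x k)
    (hrec : ∀ m, N ≤ m → ∃ r, 0 ≤ r ∧ r ≤ 1 + α (m + 1) ∧ x (m + 1) = r * x m + e (m + 1)) :
    ∃ M : ℝ, Tendsto x atTop (𝓝 M) := by
  set S : ℕ → ℝ := fun n => ∑ i ∈ Finset.Icc 1 n, e i with hSdef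
  have hSsucc : ∀ n, S (n + 1) = S n + e (n + 1) := by
    intro n
    simp only [hSdef]
    rw [Finset.sum_Icc_succ_top (by omega : 1 ≤ n + 1)]
  set A : ℕ → ℝ := fun n => ∑ i ∈ Finset.Icc 1 n, α i with hAdef
  have hAsucc : ∀ n, A (n + 1) = A n + α (n + 1) := by
    intro n
    simp only [hAdef]
    rw [Finset.sum_Icc_succ_top (by omega : 1 ≤ n + 1)]
  set T0 : ℝ := ∑' n, α n with hT0def
  have hfin_le : ∀ s : Finset ℕ, ∑ i ∈ s, α i ≤ T0 :=
    fun s => Summable.sum_le_tsum s (fun i _ => hα0 i) hαsum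
  have hA_le : ∀ n, A n ≤ T0 := fun n => hfin_le _
  -- S is bounded
  obtain ⟨C, hC⟩ : ∃ C, ∀ n, |S n| ≤ C := by
    have h1 : Tendsto (fun n => |S n|) atTop (𝓝 |L|) := hS.abs
    obtain ⟨C, hC⟩ := h1.bddAbove_range
    exact ⟨C, fun n => hC ⟨n, rfl⟩⟩
  have hC0 : 0 ≤ C := le_trans (abs_nonneg _) (hC 0)
  -- A converges
  have hA : Tendsto A atTop (𝓝 (T0 - α 0)) := by
    have h1 : Tendsto (fun n => ∑ i ∈ Finset.range (n + 1), α i) atTop (𝓝 T0) :=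
      hαsum.hasSum.tendsto_sum_nat.comp (tendsto_add_atTop_nat 1)
    have h2 : ∀ n, (∑ i ∈ Finset.range (n + 1), α i) - α 0 = A n := by
      intro n
      rw [Finset.sum_range_succ']
      simp only [hAdef]
      have : ∀ n, ∑ i ∈ Finset.Icc 1 n, α i = ∑ k ∈ Finset.range n, α (k + 1) := by
        intro n
        induction n with
        | zero => simp
        | succ n ih => rw [Finset.sum_Icc_succ_top (by omega : 1 ≤ n + 1), ih,
            Finset.sum_range_succ]
      rw [this]; ring
    exact (h1.sub_const (α 0)).congr h2
  -- boundedness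
  set u : ℕ → ℝ := fun n => x n - S n + C with hudef
  have hu0 : ∀ n, N ≤ n → 0 ≤ u n := by
    intro n hn
    have h1 := hpos n hn
    have h2 := abs_le.mp (hC n)
    simp only [hudef]; linarith [h2.2]
  have hustep : ∀ m, N ≤ m → u (m + 1) ≤ (1 + α (m + 1)) * u m := by
    intro m hm
    obtain ⟨r, hr0, hr1, hx⟩ := hrec m hm
    have hxm := hpos m hm
    have h2 := abs_le.mp (hC m)
    have key : r * x m ≤ (1 + α (m + 1)) * x m := mul_le_mul_of_nonneg_right hr1 hxm.le
    have key2 : 0 ≤ α (m + 1) * (C - S m) := mul_nonneg (hα0 _) (by linarith [h2.2])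
    simp only [hudef]
    rw [hSsucc, hx]
    nlinarith
  have hugrow : ∀ k, u (N + k) ≤ Real.exp (∑ i ∈ Finset.Icc (N + 1) (N + k), α i) * u N := by
    intro k
    induction k with
    | zero =>
      simp [Finset.Icc_eq_empty_of_lt (by omega : N < N + 1)]
    | succ k ih =>
      have h1 : u (N + (k + 1)) ≤ (1 + α (N + k + 1)) * u (N + k) := by
        have := hustep (N + k) (by omega)
        simpa [Nat.add_assoc] using this
      have huNk := hu0 (N + k) (by omega)
      have h2 : (1 + α (N + k + 1)) * u (N + k) ≤ Real.exp (α (N + k + 1)) * u (N + k) := by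
        apply mul_le_mul_of_nonneg_right _ huNk
        linarith [Real.add_one_le_exp (α (N + k + 1))]
      have h3 : Real.exp (α (N + k + 1)) * u (N + k) ≤
          Real.exp (α (N + k + 1)) * (Real.exp (∑ i ∈ Finset.Icc (N + 1) (N + k), α i) * u N) :=
        mul_le_mul_of_nonneg_left ih (Real.exp_pos _).le
      have h4 : Finset.Icc (N + 1) (N + (k + 1)) = insert (N + k + 1) (Finset.Icc (N + 1) (N + k)) := by
        ext i
        simp only [Finset.mem_Icc, Finset.mem_insert]
        omega
      rw [h4, Finset.sum_insert (by simp), Real.exp_add]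
      calc u (N + (k + 1)) ≤ (1 + α (N + k + 1)) * u (N + k) := h1
        _ ≤ Real.exp (α (N + k + 1)) * u (N + k) := h2
        _ ≤ Real.exp (α (N + k + 1)) * (Real.exp (∑ i ∈ Finset.Icc (N + 1) (N + k), α i) * u N) := h3
        _ = Real.exp (α (N + k + 1)) * Real.exp (∑ i ∈ Finset.Icc (N + 1) (N + k), α i) * u N := by ring
  set B : ℝ := Real.exp T0 * u N with hBdef
  have huN := hu0 N le_rfl
  have hB0 : 0 ≤ B := mul_nonneg (Real.exp_pos _).le huN
  have hB : ∀ n, N ≤ n → x n ≤ B := by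
    intro n hn
    obtain ⟨k, rfl⟩ := le_iff_exists_add.mp hn
    have h1 := hugrow k
    have h2 := abs_le.mp (hC (N + k))
    have h3 : Real.exp (∑ i ∈ Finset.Icc (N + 1) (N + k), α i) * u N ≤ Real.exp T0 * u N :=
      mul_le_mul_of_nonneg_right (Real.exp_le_exp.mpr (hfin_le _)) huN
    have h4 : x (N + k) = u (N + k) + S (N + k) - C := by simp [hudef]; ring
    simp only [hBdef]
    linarith [h2.2]
  -- v antitone
  set v : ℕ → ℝ := fun n => x n - S n - B * A n with hvdef
  have hvstep : ∀ m, N ≤ m → v (m + 1) ≤ v m := by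
    intro m hm
    obtain ⟨r, hr0, hr1, hx⟩ := hrec m hm
    have hxm := hpos m hm
    have hxB := hB m hm
    have key : r * x m ≤ (1 + α (m + 1)) * x m := mul_le_mul_of_nonneg_right hr1 hxm.le
    have key2 : α (m + 1) * x m ≤ α (m + 1) * B := mul_le_mul_of_nonneg_left hxB (hα0 _)
    simp only [hvdef]
    rw [hSsucc, hAsucc, hx]
    nlinarith
  have hvlb : ∀ n, N ≤ n → -C - B * T0 ≤ v n := by
    intro n hn
    have h1 := hpos n hn
    have h2 := abs_le.mp (hC n)
    have h3 : B * A n ≤ B * T0 := mul_le_mul_of_nonneg_left (hA_le n) hB0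
    simp only [hvdef]
    linarith [h2.1]
  set w : ℕ → ℝ := fun k => v (k + N) with hwdef
  have hw_anti : Antitone w := by
    apply antitone_nat_of_succ_le
    intro k
    simp only [hwdef]
    rw [show k + 1 + N = (k + N) + 1 by omega]
    exact hvstep (k + N) (by omega)
  have hw_bdd : BddBelow (Set.range w) := by
    refine ⟨-C - B * T0, ?_⟩
    rintro y ⟨k, rfl⟩
    exact hvlb (k + N) (by omega)
  have hw : Tendsto w atTop (𝓝 (⨅ k, w k)) := tendsto_atTop_ciInf hw_anti hw_bdd
  refine ⟨(⨅ k, w k) + L + B * (T0 - α 0), ?_⟩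
  rw [← tendsto_add_atTop_iff_nat N]
  have hSN : Tendsto (fun n => S (n + N)) atTop (𝓝 L) := (tendsto_add_atTop_iff_nat N).mpr hS
  have hAN : Tendsto (fun n => A (n + N)) atTop (𝓝 (T0 - α 0)) :=
    (tendsto_add_atTop_iff_nat N).mpr hA
  have hBA : Tendsto (fun n => B * A (n + N)) atTop (𝓝 (B * (T0 - α 0))) := hAN.const_mul B
  refine ((hw.add hSN).add hBA).congr fun n => ?_
  simp only [hwdef, hvdef]
  ring

/-- Theorem 1 (i): under (A1) and (A4), `X_n · 1{N_T < ∞}` possesses a finite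
limit a.e. -/
theorem stmt0 {Ω : Type*} {m : MeasurableSpace Ω} {μ : Measure Ω} [IsProbabilityMeasure μ]
    (ℱ : Filtration ℕ m) (X : ℕ → Ω → ℝ)
    (hadpt : Adapted ℱ X) (hint : ∀ n, Integrable (X n) μ)
    -- (A1)
    (α : ℕ → ℝ) (hα0 : ∀ n, 0 ≤ α n) (hαsum : Summable α)
    (hA1 : ∀ n, 1 ≤ n → ∀ᵐ ω ∂μ, X (n - 1) ω ≠ 0 →
      0 ≤ (μ[X n | ℱ (n - 1)]) ω / X (n - 1) ω ∧
        (μ[X n | ℱ (n - 1)]) ω / X (n - 1) ω ≤ 1 + α n)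
    -- (A4)
    (hA4 : ∀ᵐ ω ∂μ, ∃ L : ℝ, Tendsto
      (fun N => ∑ i ∈ Finset.Icc 1 N, (X i ω - (μ[X i | ℱ (i - 1)]) ω)) atTop (𝓝 L)) :
    ∀ᵐ ω ∂μ, ∃ L : ℝ, Tendsto
      (fun n => X n ω * (if {i : ℕ | 1 ≤ i ∧ Crossing X i ω}.Finite then (1 : ℝ) else 0))
      atTop (𝓝 L) := by
  have hA1' : ∀ᵐ ω ∂μ, ∀ n, 1 ≤ n → (X (n - 1) ω ≠ 0 →
      0 ≤ (μ[X n | ℱ (n - 1)]) ω / X (n - 1) ω ∧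
        (μ[X n | ℱ (n - 1)]) ω / X (n - 1) ω ≤ 1 + α n) := by
    rw [ae_all_iff]
    intro n
    by_cases h : 1 ≤ n
    · filter_upwards [hA1 n h] with ω hω _
      exact hω
    · filter_upwards with ω h'
      exact absurd h' h
  filter_upwards [hA1', hA4] with ω hω1 hω4
  obtain ⟨L, hL⟩ := hω4
  by_cases hfin : {i : ℕ | 1 ≤ i ∧ Crossing X i ω}.Finite
  · -- only finitely many crossings: must show that X n ω converges
    simp only [hfin, if_true, mul_one]
    obtain ⟨N, hN⟩ := hfin.bddAbove
    have hnc : ∀ m, N ≤ m → ¬ Crossing X (m + 1) ω := by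
      intro m hm hc
      have : m + 1 ≤ N := hN ⟨by omega, hc⟩
      omega
    have step : ∀ m, N ≤ m →
        ((0 < X m ω → 0 < X (m + 1) ω) ∧ (X m ω < 0 → X (m + 1) ω < 0) ∧
          (X m ω = 0 → X (m + 1) ω = 0)) := by
      intro m hm
      have h := hnc m hm
      unfold Crossing at h
      push_neg at h
      simp only [Nat.add_sub_cancel] at h
      obtain ⟨h1, h2, h3⟩ := h
      refine ⟨?_, ?_, ?_⟩
      · intro hp
        rcases lt_trichotomy (X (m + 1) ω) 0 with hh | hh | hh
        · linarith [h2 hh]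
        · exact absurd (h3 hh) (by linarith)
        · exact hh
      · intro hp
        rcases lt_trichotomy (X (m + 1) ω) 0 with hh | hh | hh
        · exact hh
        · exact absurd (h3 hh) (by linarith)
        · linarith [h1 hh]
      · intro hp
        rcases lt_trichotomy (X (m + 1) ω) 0 with hh | hh | hh
        · linarith [h2 hh]
        · exact hh
        · linarith [h1 hh]
    -- helper to build the recursion for seq_conv, for a sign s = ±1
    have hrec_gen : ∀ s : ℝ, (∀ k, N ≤ k → 0 < s * X k ω) →
        ∀ m, N ≤ m → ∃ r, 0 ≤ r ∧ r ≤ 1 + α (m + 1) ∧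
          s * X (m + 1) ω = r * (s * X m ω) +
            (s * (X (m + 1) ω - (μ[X (m + 1) | ℱ ((m + 1) - 1)]) ω)) := by
      intro s hsp m hm
      have hx0 : X m ω ≠ 0 := by
        intro h
        have := hsp m hm
        rw [h] at this
        simp at this
      have h1 := hω1 (m + 1) (by omega)
      simp only [Nat.add_sub_cancel] at h1 ⊢
      obtain ⟨hr0, hr1⟩ := h1 hx0
      refine ⟨(μ[X (m + 1) | ℱ m]) ω / X m ω, hr0, hr1, ?_⟩
      field_simp
      ring
    rcases lt_trichotomy (X N ω) 0 with hsgn | hsgn | hsgn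
    · -- eventually negative: apply seq_conv to -X
      have hp : ∀ j, X (N + j) ω < 0 := by
        intro j
        induction j with
        | zero => simpa using hsgn
        | succ j ih => exact (step (N + j) (by omega)).2.1 ih
      have hp' : ∀ k, N ≤ k → 0 < (-1 : ℝ) * X k ω := by
        intro k hk
        obtain ⟨j, rfl⟩ := le_iff_exists_add.mp hk
        have := hp j
        linarith
      have hS' : Tendsto
          (fun n => ∑ i ∈ Finset.Icc 1 n,
            ((-1 : ℝ) * (X i ω - (μ[X i | ℱ (i - 1)]) ω))) atTop (𝓝 (-L)) := by
        have := hL.neg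
        refine this.congr fun n => ?_
        rw [← Finset.sum_neg_distrib]
        exact Finset.sum_congr rfl fun i _ => by ring
      obtain ⟨M, hM⟩ := seq_conv (fun n => (-1 : ℝ) * X n ω)
        (fun i => (-1 : ℝ) * (X i ω - (μ[X i | ℱ (i - 1)]) ω)) α hα0 hαsum (-L) hS' N hp'
        (fun m hm => hrec_gen (-1) hp' m hm)
      refine ⟨-M, ?_⟩
      have := hM.neg
      refine this.congr fun n => by ring
    · -- eventually zero
      have hz : ∀ j, X (N + j) ω = 0 := by
        intro j
        induction j with
        | zero => simpa using hsgn
        | succ j ih => exact (step (N + j) (by omega)).2.2 ih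
      refine ⟨0, Tendsto.congr' ?_ tendsto_const_nhds⟩
      filter_upwards [eventually_ge_atTop N] with n hn
      obtain ⟨j, rfl⟩ := le_iff_exists_add.mp hn
      exact (hz j).symm
    · -- eventually positive: apply seq_conv to X
      have hp : ∀ j, 0 < X (N + j) ω := by
        intro j
        induction j with
        | zero => simpa using hsgn
        | succ j ih => exact (step (N + j) (by omega)).1 ih
      have hp' : ∀ k, N ≤ k → 0 < (1 : ℝ) * X k ω := by
        intro k hk
        obtain ⟨j, rfl⟩ := le_iff_exists_add.mp hk
        have := hp j
        linarith
      have hS' : Tendsto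
          (fun n => ∑ i ∈ Finset.Icc 1 n,
            ((1 : ℝ) * (X i ω - (μ[X i | ℱ (i - 1)]) ω))) atTop (𝓝 L) := by
        refine hL.congr fun n => ?_
        exact Finset.sum_congr rfl fun i _ => by ring
      obtain ⟨M, hM⟩ := seq_conv (fun n => (1 : ℝ) * X n ω)
        (fun i => (1 : ℝ) * (X i ω - (μ[X i | ℱ (i - 1)]) ω)) α hα0 hαsum L hS' N hp'
        (fun m hm => hrec_gen 1 hp' m hm)
      refine ⟨M, hM.congr fun n => by ring⟩
  · simp only [hfin, if_false, mul_zero]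
    exact ⟨0, tendsto_const_nhds⟩
end

section
/- Suppose X = (X_n)_{n≥0} satisfies assumptions (A1) and (A4). Then the inequality limsup_{n→∞} |X_n| · 1{N_T = ∞} ≤ limsup_{n→∞} |U_n| holds almost everywhere. -/
open MeasureTheory Filter Topology
open scoped Classical

private lemma abs_le_abs_sub_of_mul_nonpos' {a b : ℝ} (h : a * b ≤ 0) : |a| ≤ |a - b| := by
  rcases mul_nonpos_iff.mp h with ⟨ha, hb⟩ | ⟨ha, hb⟩
  · rw [abs_of_nonneg ha, abs_of_nonneg (by linarith)]; linarith
  · rw [abs_of_nonpos ha, abs_of_nonpos (by linarith)]; linarith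

private lemma prod_le_exp_sum' (a : ℕ → ℝ) (ha : ∀ j, 0 ≤ a j) (F : Finset ℕ) :
    ∏ j ∈ F, (1 + a j) ≤ Real.exp (∑ j ∈ F, a j) := by
  rw [Real.exp_sum]
  exact Finset.prod_le_prod (fun j _ => by linarith [ha j])
    (fun j _ => by have := Real.add_one_le_exp (a j); linarith)

private lemma chain' (a s p : ℕ → ℝ) (δ : ℝ) (ha : ∀ j, 0 ≤ a j) (t : ℕ) :
    ∀ d : ℕ,
    (∀ k, t ≤ k → k ≤ t + d → |s k - s t| ≤ δ) →
    (∀ k, t ≤ k → k < t + d → 0 ≤ p k ∧ ∃ r, 0 ≤ r ∧ r ≤ 1 + a (k + 1) ∧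
        p (k + 1) = r * p k + (s (k + 1) - s k)) →
    p (t + d) - (s (t + d) - s t) + δ ≤
      (∏ j ∈ Finset.Icc (t + 1) (t + d), (1 + a j)) * (p t + δ) := by
  intro d
  induction d with
  | zero =>
    intro _ _
    rw [Finset.Icc_eq_empty (by omega), Finset.prod_empty]
    simp
  | succ d ih =>
    intro hs hstep
    have ihd := ih (fun k hk hk' => hs k hk (by omega)) (fun k hk hk' => hstep k hk (by omega))
    obtain ⟨hp0, r, hr0, hr1, hrec⟩ := hstep (t + d) (by omega) (by omega)
    have hsd : |s (t + d) - s t| ≤ δ := hs (t + d) (by omega) (by omega)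
    have hδ' : 0 ≤ -(s (t + d) - s t) + δ := by
      rcases abs_le.mp hsd with ⟨h', h''⟩; linarith
    have haj := ha (t + d + 1)
    have hprod : (∏ j ∈ Finset.Icc (t + 1) (t + (d+1)), (1 + a j))
        = (∏ j ∈ Finset.Icc (t + 1) (t + d), (1 + a j)) * (1 + a (t + d + 1)) := by
      show (∏ j ∈ Finset.Icc (t + 1) (t + d + 1), (1 + a j)) = _
      rw [Finset.prod_Icc_succ_top (by omega)]
    rw [hprod]
    have hstep1 : p (t + (d+1)) - (s (t + (d+1)) - s t) + δ
        = r * p (t + d) - (s (t + d) - s t) + δ := by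
      show p (t + d + 1) - (s (t + d + 1) - s t) + δ = _
      rw [hrec]; ring
    rw [hstep1]
    nlinarith [mul_le_mul_of_nonneg_left ihd (show (0:ℝ) ≤ 1 + a (t+d+1) by linarith),
      mul_le_mul_of_nonneg_right hr1 hp0]

/-- Theorem 1 (iii): under (A1) and (A4),
`limsup_n |X_n| · 1{N_T = ∞} ≤ limsup_n |U_n|` a.e., where
`U_n = E[X_n | F_{n-1}] · 1{X_{n-1} = 0}`. -/
theorem stmt2 {Ω : Type*} {m : MeasurableSpace Ω} {μ : Measure Ω} [IsProbabilityMeasure μ]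
    (ℱ : Filtration ℕ m) (X : ℕ → Ω → ℝ)
    (hadpt : Adapted ℱ X) (hint : ∀ n, Integrable (X n) μ)
    -- (A1)
    (α : ℕ → ℝ) (hα0 : ∀ n, 0 ≤ α n) (hαsum : Summable α)
    (hA1 : ∀ n, 1 ≤ n → ∀ᵐ ω ∂μ, X (n - 1) ω ≠ 0 →
      0 ≤ (μ[X n | ℱ (n - 1)]) ω / X (n - 1) ω ∧
        (μ[X n | ℱ (n - 1)]) ω / X (n - 1) ω ≤ 1 + α n)
    -- (A4)
    (hA4 : ∀ᵐ ω ∂μ, ∃ L : ℝ, Tendsto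
      (fun N => ∑ i ∈ Finset.Icc 1 N, (X i ω - (μ[X i | ℱ (i - 1)]) ω)) atTop (𝓝 L))
    -- `U_n`
    (U : ℕ → Ω → ℝ)
    (hU : ∀ n, 1 ≤ n → ∀ ω,
      U n ω = (μ[X n | ℱ (n - 1)]) ω * (if X (n - 1) ω = 0 then (1 : ℝ) else 0)) :
    ∀ᵐ ω ∂μ,
      Filter.limsup (fun n => ((|X n ω| *
          (if {i : ℕ | 1 ≤ i ∧ Crossing X i ω}.Infinite then (1 : ℝ) else 0) : ℝ) : EReal))
        atTop
      ≤ Filter.limsup (fun n => ((|U n ω| : ℝ) : EReal)) atTop := by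
  have hA1' : ∀ᵐ ω ∂μ, ∀ n, 1 ≤ n → X (n - 1) ω ≠ 0 →
      0 ≤ (μ[X n | ℱ (n - 1)]) ω / X (n - 1) ω ∧
        (μ[X n | ℱ (n - 1)]) ω / X (n - 1) ω ≤ 1 + α n := by
    rw [ae_all_iff]
    intro n
    by_cases h : 1 ≤ n
    · filter_upwards [hA1 n h] with ω hω using fun _ => hω
    · filter_upwards with ω using fun h' => absurd h' h
  filter_upwards [hA1', hA4] with ω h1 h4
  have hg0 : ((0:ℝ) : EReal) ≤ Filter.limsup (fun n => ((|U n ω| : ℝ) : EReal)) atTop := by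
    refine le_trans (le_of_eq (Filter.limsup_const ((0:ℝ):EReal)).symm)
      (Filter.limsup_le_limsup (Eventually.of_forall fun n => ?_))
    exact EReal.coe_le_coe_iff.mpr (abs_nonneg (U n ω))
  by_cases hcr : {i : ℕ | 1 ≤ i ∧ Crossing X i ω}.Infinite
  case neg =>
    simp only [if_neg hcr, mul_zero]
    exact le_trans (le_of_eq (Filter.limsup_const ((0:ℝ):EReal))) hg0
  case pos =>
  simp only [if_pos hcr, mul_one]
  set s : ℕ → ℝ := fun N => ∑ i ∈ Finset.Icc 1 N, (X i ω - (μ[X i | ℱ (i - 1)]) ω)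
    with hsdef
  obtain ⟨L, hL⟩ := h4
  have ssucc : ∀ k : ℕ, s (k + 1) - s k = X (k+1) ω - (μ[X (k+1) | ℱ k]) ω := by
    intro k
    have h' : s (k+1) = s k + (X (k+1) ω - (μ[X (k+1) | ℱ ((k+1) - 1)]) ω) := by
      rw [hsdef]
      exact Finset.sum_Icc_succ_top (by omega) _
    rw [h']
    simp only [Nat.add_sub_cancel]
    ring
  refine le_of_forall_gt_imp_ge_of_dense fun c hc => ?_
  obtain ⟨cR, hc1, hc2⟩ := EReal.exists_between_coe_real hc
  refine le_trans ?_ hc2.le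
  have hcR0 : (0:ℝ) ≤ cR := by exact_mod_cast le_trans hg0 hc1.le
  have hUev : ∀ᶠ n in atTop, |U n ω| ≤ cR := by
    filter_upwards [Filter.eventually_lt_of_limsup_lt hc1] with n hn
    exact_mod_cast hn.le
  obtain ⟨N0, hN0⟩ := eventually_atTop.mp hUev
  have key : ∀ δ : ℝ, 0 < δ → ∀ᶠ n in atTop, |X n ω| ≤ Real.exp δ * (cR + 2*δ) := by
    intro δ hδ
    obtain ⟨N1, hN1⟩ := Metric.cauchySeq_iff.mp hL.cauchySeq δ hδ
    obtain ⟨N2, hN2⟩ := Metric.cauchySeq_iff.mp (hαsum.hasSum.tendsto_sum_nat).cauchySeq δ hδ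
    have hs' : ∀ k l, N1 ≤ k → N1 ≤ l → |s k - s l| ≤ δ := by
      intro k l hk hl
      have := hN1 k hk l hl
      rw [Real.dist_eq] at this
      exact this.le
    have hαb : ∀ u v : ℕ, N2 ≤ u → u ≤ v → ∑ j ∈ Finset.Icc (u+1) v, α j ≤ δ := by
      intro u v hu huv
      have h' : ∑ j ∈ Finset.Icc (u+1) v, α j
          = ∑ j ∈ Finset.range (v+1), α j - ∑ j ∈ Finset.range (u+1), α j := by
        rw [← Finset.Ico_add_one_right_eq_Icc, Finset.sum_Ico_eq_sub _ (by omega)]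
      have h'' := hN2 (v+1) (by omega) (u+1) (by omega)
      rw [Real.dist_eq] at h''
      rcases abs_le.mp h''.le with ⟨_, h2⟩
      linarith
    set Nb := N0 + N1 + N2 + 1 with hNb
    obtain ⟨t0, ⟨ht01, ht0R⟩, ht0gt⟩ :=
      (hcr.mono (fun i hi => ⟨hi.1, Or.inr hi.2⟩ :
        {i : ℕ | 1 ≤ i ∧ Crossing X i ω} ⊆
          {i : ℕ | 1 ≤ i ∧ (X (i-1) ω = 0 ∨ Crossing X i ω)})).exists_gt Nb
    rw [eventually_atTop]
    refine ⟨t0, fun n hn => ?_⟩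
    obtain ⟨t, ⟨ht0t, htR⟩, htle, hmax⟩ :
        ∃ t, (t0 ≤ t ∧ (X (t-1) ω = 0 ∨ Crossing X t ω)) ∧ t ≤ n ∧
          ∀ k, t < k → k ≤ n → ¬(t0 ≤ k ∧ (X (k-1) ω = 0 ∨ Crossing X k ω)) :=
      by
      refine ⟨Nat.findGreatest (fun k => t0 ≤ k ∧ (X (k-1) ω = 0 ∨ Crossing X k ω)) n,
        ?_, Nat.findGreatest_le n, fun k hk hk' => Nat.findGreatest_is_greatest hk hk'⟩
      exact Nat.findGreatest_spec
        (P := fun k => t0 ≤ k ∧ (X (k-1) ω = 0 ∨ Crossing X k ω)) hn ⟨le_refl t0, ht0R⟩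
    have ht1 : 1 ≤ t := le_trans ht01 ht0t
    have htNb : Nb ≤ t := by omega
    -- bound at the reset time t
    have hεt : |s t - s (t-1)| ≤ δ := hs' t (t-1) (by omega) (by omega)
    have hXt : |X t ω| ≤ cR + δ := by
      obtain ⟨mm, hmm⟩ : ∃ mm, t = mm + 1 := ⟨t - 1, by omega⟩
      have hst : s t - s (t-1) = X t ω - (μ[X t | ℱ (t-1)]) ω := by
        rw [hmm]
        simpa using ssucc mm
      by_cases hz : X (t-1) ω = 0
      · have hUt : U t ω = (μ[X t | ℱ (t-1)]) ω := by
          rw [hU t ht1 ω, if_pos hz, mul_one]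
        have hUb : |U t ω| ≤ cR := hN0 t (by omega)
        have hXteq : X t ω = (s t - s (t-1)) + U t ω := by rw [hst, hUt]; ring
        rw [hXteq]
        calc |(s t - s (t-1)) + U t ω| ≤ |s t - s (t-1)| + |U t ω| := abs_add_le _ _
          _ ≤ cR + δ := by linarith
      · have hcross : Crossing X t ω := by
          rcases htR with h' | h'
          · exact absurd h' hz
          · exact h'
        obtain ⟨hq0, hq1⟩ := h1 t ht1 hz
        have hyq : (μ[X t | ℱ (t-1)]) ω
            = ((μ[X t | ℱ (t-1)]) ω / X (t-1) ω) * X (t-1) ω :=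
          (div_mul_cancel₀ _ hz).symm
        have hXty : X t ω * (μ[X t | ℱ (t-1)]) ω ≤ 0 := by
          rcases hcross with ⟨h', h''⟩ | ⟨h', h''⟩ | ⟨h', h''⟩
          · rw [hyq]
            exact mul_nonpos_iff.mpr (Or.inl ⟨h'.le,
              mul_nonpos_iff.mpr (Or.inl ⟨hq0, h''⟩)⟩)
          · rw [hyq]
            exact mul_nonpos_iff.mpr (Or.inr ⟨h'.le, mul_nonneg hq0 h''⟩)
          · rw [h']; ring_nf; exact le_refl 0
        have habs := abs_le_abs_sub_of_mul_nonpos' hXty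
        rw [← hst] at habs
        calc |X t ω| ≤ |s t - s (t-1)| := habs
          _ ≤ cR + δ := by linarith
    have hexp1 : (1:ℝ) ≤ Real.exp δ := by
      have := Real.add_one_le_exp δ; linarith
    rcases eq_or_lt_of_le htle with heq | htlt
    · -- t = n
      rw [← heq]
      calc |X t ω| ≤ cR + δ := hXt
        _ ≤ Real.exp δ * (cR + 2*δ) := by nlinarith
    · -- t < n
      have hnc : ∀ k, t ≤ k → k < n → X k ω ≠ 0 ∧ ¬ Crossing X (k+1) ω := by
        intro k hk hk'
        have h' := hmax (k+1) (by omega) (by omega)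
        have h'' : ¬(X k ω = 0 ∨ Crossing X (k+1) ω) := by
          intro hor
          exact h' ⟨by omega, by simpa using hor⟩
        exact ⟨fun h0 => h'' (Or.inl h0), fun hc => h'' (Or.inr hc)⟩
      have hsignstep : ∀ k, t ≤ k → k < n →
          ((0 < X k ω → 0 < X (k+1) ω) ∧ (X k ω < 0 → X (k+1) ω < 0)) := by
        intro k hk hk'
        obtain ⟨hne, hnc'⟩ := hnc k hk hk'
        constructor
        · intro h'
          rcases lt_trichotomy (X (k+1) ω) 0 with h'' | h'' | h''
          · exact absurd (Or.inr (Or.inl ⟨h'', by simpa using h'.le⟩)) hnc'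
          · exact absurd (Or.inr (Or.inr ⟨h'', by simpa using ne_of_gt h'⟩)) hnc'
          · exact h''
        · intro h'
          rcases lt_trichotomy (X (k+1) ω) 0 with h'' | h'' | h''
          · exact h''
          · exact absurd (Or.inr (Or.inr ⟨h'', by simpa using ne_of_lt h'⟩)) hnc'
          · exact absurd (Or.inl ⟨h'', by simpa using h'.le⟩) hnc'
      have hrecur : ∀ k, t ≤ k → k < n → ∃ r, 0 ≤ r ∧ r ≤ 1 + α (k+1) ∧
          X (k+1) ω = r * X k ω + (s (k+1) - s k) := by
        intro k hk hk'
        have hne := (hnc k hk hk').1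
        have h1k := h1 (k+1) (by omega) (by simpa using hne)
        simp only [Nat.add_sub_cancel] at h1k
        obtain ⟨hq0, hq1⟩ := h1k
        refine ⟨(μ[X (k+1) | ℱ k]) ω / X k ω, hq0, hq1, ?_⟩
        rw [ssucc k]
        have h'' : (μ[X (k+1) | ℱ k]) ω / X k ω * X k ω = (μ[X (k+1) | ℱ k]) ω :=
          div_mul_cancel₀ _ hne
        linarith
      have hQ0 : (0:ℝ) ≤ ∏ j ∈ Finset.Icc (t + 1) n, (1 + α j) :=
        Finset.prod_nonneg fun j _ => by linarith [hα0 j]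
      have hQexp : ∏ j ∈ Finset.Icc (t + 1) n, (1 + α j) ≤ Real.exp δ :=
        le_trans (prod_le_exp_sum' α hα0 _)
          (Real.exp_le_exp.mpr (hαb t n (by omega) htle))
      have hsn : |s n - s t| ≤ δ := hs' n t (by omega) (by omega)
      have hXtd : X t ω + δ ≤ cR + 2*δ ∧ -(X t ω) + δ ≤ cR + 2*δ := by
        rcases abs_le.mp hXt with ⟨h', h''⟩
        constructor <;> linarith
      have hXtne : X t ω ≠ 0 := (hnc t (le_refl t) htlt).1
      have hadd : t + (n - t) = n := by omega
      rcases hXtne.lt_or_gt with hneg | hpos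
      · -- negative case
        have hall : ∀ d, t + d ≤ n → X (t + d) ω < 0 := by
          intro d
          induction d with
          | zero => intro _; simpa using hneg
          | succ d ih =>
            intro hd
            exact (hsignstep (t+d) (by omega) (by omega)).2 (ih (by omega))
        have hch := chain' α (fun k => -(s k)) (fun k => -(X k ω)) δ hα0 t (n - t)
          (fun k hk hk' => by
            show |(-(s k)) - (-(s t))| ≤ δ
            rw [show -(s k) - -(s t) = -(s k - s t) by ring, abs_neg]
            exact hs' k t (by omega) (by omega))
          (fun k hk hk' => by
            have hpk := hall (k - t) (by omega)
            rw [Nat.add_sub_cancel' hk] at hpk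
            obtain ⟨r, hr0, hr1, hr⟩ := hrecur k hk (by omega)
            refine ⟨by simpa using hpk.le, r, hr0, hr1, ?_⟩
            show -(X (k+1) ω) = r * -(X k ω) + (-(s (k+1)) - -(s k))
            rw [hr]; ring)
        rw [hadd] at hch
        have hch' : -(X n ω) - (-(s n) - -(s t)) + δ ≤
            (∏ j ∈ Finset.Icc (t + 1) n, (1 + α j)) * (-(X t ω) + δ) := hch
        have hXn : X n ω < 0 := by
          have h'' := hall (n - t) (by omega)
          rwa [hadd] at h''
        rw [abs_of_neg hXn]
        rcases abs_le.mp hsn with ⟨h', h''⟩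
        have hm1 := mul_le_mul_of_nonneg_left hXtd.2 hQ0
        have hm2 := mul_le_mul_of_nonneg_right hQexp
          (show (0:ℝ) ≤ -(X t ω) + δ by nlinarith [abs_nonneg (X t ω), neg_abs_le (X t ω)])
        have hm3 := mul_le_mul_of_nonneg_left hXtd.2 (Real.exp_pos δ).le
        nlinarith
      · -- positive case
        have hall : ∀ d, t + d ≤ n → 0 < X (t + d) ω := by
          intro d
          induction d with
          | zero => intro _; simpa using hpos
          | succ d ih =>
            intro hd
            exact (hsignstep (t+d) (by omega) (by omega)).1 (ih (by omega))
        have hch := chain' α s (fun k => X k ω) δ hα0 t (n - t)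
          (fun k hk hk' => hs' k t (by omega) (by omega))
          (fun k hk hk' => by
            have hpk := hall (k - t) (by omega)
            rw [Nat.add_sub_cancel' hk] at hpk
            exact ⟨hpk.le, hrecur k hk (by omega)⟩)
        rw [hadd] at hch
        have hch' : X n ω - (s n - s t) + δ ≤
            (∏ j ∈ Finset.Icc (t + 1) n, (1 + α j)) * (X t ω + δ) := hch
        have hXn : 0 < X n ω := by
          have h'' := hall (n - t) (by omega)
          rwa [hadd] at h''
        rw [abs_of_pos hXn]
        rcases abs_le.mp hsn with ⟨h', h''⟩
        have hm1 := mul_le_mul_of_nonneg_left hXtd.1 hQ0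
        have hm2 := mul_le_mul_of_nonneg_right hQexp
          (show (0:ℝ) ≤ cR + 2*δ by linarith)
        linarith
  have hlim : ∀ δ : ℝ, 0 < δ →
      Filter.limsup (fun n => ((|X n ω| : ℝ) : EReal)) atTop
        ≤ ((Real.exp δ * (cR + 2*δ) : ℝ) : EReal) := by
    intro δ hδ
    refine Filter.limsup_le_of_le (by isBoundedDefault) ?_
    filter_upwards [key δ hδ] with n hn
    exact EReal.coe_le_coe_iff.mpr hn
  have htend : Tendsto (fun δ : ℝ => ((Real.exp δ * (cR + 2*δ) : ℝ) : EReal))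
      (𝓝[>] (0:ℝ)) (𝓝 ((cR : ℝ) : EReal)) := by
    have hC : Continuous fun δ : ℝ => Real.exp δ * (cR + 2*δ) :=
      Real.continuous_exp.mul (continuous_const.add (continuous_const.mul continuous_id))
    have hcont : Tendsto (fun δ : ℝ => Real.exp δ * (cR + 2*δ)) (𝓝 (0:ℝ)) (𝓝 cR) := by
      have h0 : Real.exp 0 * (cR + 2*0) = cR := by simp
      simpa [h0] using hC.tendsto 0
    exact (continuous_coe_real_ereal.tendsto cR).comp (hcont.mono_left nhdsWithin_le_nhds)
  refine ge_of_tendsto htend ?_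
  filter_upwards [self_mem_nhdsWithin] with δ hδ
  exact hlim δ hδ
end

section
/- Suppose X = (X_n)_{n≥0} satisfies assumptions (A1), (A3) and (A4). Then X_n · 1{N_T = ∞} converges to zero almost everywhere as n → ∞. -/
open MeasureTheory Filter Topology
open scoped Classical

/-- The set of crossing times of a real sequence. -/
def crossSet (x : ℕ → ℝ) : Set ℕ :=
  {i : ℕ | 1 ≤ i ∧ ((0 < x i ∧ x (i - 1) ≤ 0) ∨ (x i < 0 ∧ 0 ≤ x (i - 1)) ∨
    (x i = 0 ∧ x (i - 1) ≠ 0))}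

lemma crossSet_neg (x : ℕ → ℝ) : crossSet (fun n => -x n) = crossSet x := by
  ext i
  simp only [crossSet, Set.mem_setOf_eq, neg_pos, neg_nonpos, neg_lt_zero, neg_nonneg,
    neg_eq_zero, ne_eq]
  tauto

/-- The key growth estimate along a stretch with controlled recursion. -/
lemma key_growth (x M α : ℕ → ℝ) (hα : ∀ n, 0 ≤ α n) (T : ℕ) (δ : ℝ) (hδ0 : 0 ≤ δ) :
    ∀ n, T ≤ n →
      (∀ k, T < k → k ≤ n → x k ≤ (1 + α k) * x (k - 1) + (M k - M (k - 1))) →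
      (∀ k, T ≤ k → k ≤ n → M k - M T ≤ δ) →
      x n - (M n - M T) + δ ≤ (∏ k ∈ Finset.Ioc T n, (1 + α k)) * (x T + 2 * δ) := by
  refine Nat.le_induction ?_ ?_
  · intro _ _
    simp only [Finset.Ioc_self, Finset.prod_empty, one_mul]
    linarith
  · intro n hTn IH hrec hδb
    have hrec' : ∀ k, T < k → k ≤ n → x k ≤ (1 + α k) * x (k - 1) + (M k - M (k - 1)) :=
      fun k h1 h2 => hrec k h1 (by omega)
    have hδb' : ∀ k, T ≤ k → k ≤ n → M k - M T ≤ δ := fun k h1 h2 => hδb k h1 (by omega)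
    have IH' := IH hrec' hδb'
    have hx : x (n + 1) ≤ (1 + α (n + 1)) * x n + (M (n + 1) - M n) := by
      have := hrec (n + 1) (by omega) le_rfl
      simpa using this
    have hMn : M n - M T ≤ δ := hδb' n hTn le_rfl
    have ha : 0 ≤ α (n + 1) := hα (n + 1)
    rw [Finset.prod_Ioc_succ_top hTn]
    have hmul : (1 + α (n + 1)) * (x n - (M n - M T) + δ) ≤
        (1 + α (n + 1)) * ((∏ k ∈ Finset.Ioc T n, (1 + α k)) * (x T + 2 * δ)) :=
      mul_le_mul_of_nonneg_left IH' (by linarith)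
    nlinarith [hmul]

lemma prod_le_expC (α : ℕ → ℝ) (hα : ∀ n, 0 ≤ α n) (hs : Summable α) (s : Finset ℕ) :
    ∏ k ∈ s, (1 + α k) ≤ Real.exp (∑' n, α n) := by
  calc ∏ k ∈ s, (1 + α k) ≤ ∏ k ∈ s, Real.exp (α k) := by
        refine Finset.prod_le_prod (fun k _ => by linarith [hα k]) (fun k _ => ?_)
        have := Real.add_one_le_exp (α k)
        linarith
    _ = Real.exp (∑ k ∈ s, α k) := (Real.exp_sum s α).symm
    _ ≤ Real.exp (∑' n, α n) :=
        Real.exp_le_exp.2 (hs.sum_le_tsum s (fun k _ => hα k))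

/-- Half of the pathwise argument : an eventual upper bound for `x n`. -/
lemma pos_half (x e u α : ℕ → ℝ) (hα0 : ∀ n, 0 ≤ α n) (hαsum : Summable α)
    (hi : ∀ k, 1 ≤ k → 0 < x (k - 1) → e k ≤ (1 + α k) * x (k - 1))
    (hiv : ∀ k, 1 ≤ k → x (k - 1) < 0 → e k ≤ 0)
    (hu : ∀ k, 1 ≤ k → x (k - 1) = 0 → e k = u k)
    (hu0 : Filter.Tendsto u atTop (𝓝 0))
    (hM : ∃ L : ℝ, Filter.Tendsto (fun N => ∑ i ∈ Finset.Icc 1 N, (x i - e i)) atTop (𝓝 L))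
    (hcross : ∀ N : ℕ, ∃ T, N ≤ T ∧ T ∈ crossSet x)
    (ε : ℝ) (hε : 0 < ε) : ∃ N, ∀ n, N ≤ n → x n < ε := by
  classical
  set M : ℕ → ℝ := fun N => ∑ i ∈ Finset.Icc 1 N, (x i - e i) with hMdef
  have hMd : ∀ k, 1 ≤ k → M k - M (k - 1) = x k - e k := by
    intro k hk
    obtain ⟨m, rfl⟩ : ∃ m, k = m + 1 := ⟨k - 1, by omega⟩
    have : M (m + 1) = M m + (x (m + 1) - e (m + 1)) := by
      simp only [hMdef]
      rw [Finset.sum_Icc_succ_top (by omega : 1 ≤ m + 1)]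
    simp only [Nat.add_sub_cancel]
    linarith [this]
  set C : ℝ := Real.exp (∑' n, α n) with hCdef
  have hC1 : 1 ≤ C := Real.one_le_exp (tsum_nonneg hα0)
  have hCpos : 0 < C := lt_of_lt_of_le one_pos hC1
  set ε' : ℝ := ε / (8 * C) with hε'def
  have hε' : 0 < ε' := by positivity
  obtain ⟨L, hL⟩ := hM
  obtain ⟨N₁, hN₁⟩ := (Metric.tendsto_atTop.1 hL) (ε' / 2) (by positivity)
  have hMM : ∀ m m', N₁ ≤ m → N₁ ≤ m' → |M m - M m'| ≤ ε' := by
    intro a b ha hb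
    have h1 := hN₁ a ha
    have h2 := hN₁ b hb
    rw [Real.dist_eq] at h1 h2
    have h3 : |M a - M b| ≤ |M a - L| + |L - M b| := abs_sub_le _ _ _
    rw [abs_sub_comm L (M b)] at h3
    linarith
  obtain ⟨N₂, hN₂⟩ := (Metric.tendsto_atTop.1 hu0) ε' hε'
  have hN₂' : ∀ k, N₂ ≤ k → |u k| ≤ ε' := by
    intro k hk
    have := hN₂ k hk
    rw [Real.dist_eq, sub_zero] at this
    exact le_of_lt this
  obtain ⟨T₀, hT₀ge, hT₀S⟩ := hcross (N₁ + N₂ + 2)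
  refine ⟨T₀, fun n hn => ?_⟩
  rcases le_or_gt (x n) 0 with hxn | hxn
  · linarith
  -- main case : 0 < x n
  set T : ℕ := Nat.findGreatest (· ∈ crossSet x) n with hTdef
  have hTle : T ≤ n := Nat.findGreatest_le n
  have hT₀T : T₀ ≤ T := Nat.le_findGreatest hn hT₀S
  have hTS : T ∈ crossSet x := Nat.findGreatest_spec hn hT₀S
  have hnc : ∀ k, T < k → k ≤ n → k ∉ crossSet x :=
    fun k h1 h2 => Nat.findGreatest_is_greatest h1 h2
  have hT1 : 1 ≤ T := hTS.1
  have hTN₁ : N₁ ≤ T - 1 := by omega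
  have hTN₂ : N₂ ≤ T := by omega
  -- sign back-propagation
  have hpos : ∀ k, T ≤ k → k ≤ n → 0 < x k := by
    suffices h : ∀ d k, k + d = n → T ≤ k → 0 < x k by
      intro k hk hk'; exact h (n - k) k (by omega) hk
    intro d
    induction d with
    | zero =>
      intro k hk _
      have : k = n := by omega
      subst this; exact hxn
    | succ d ih =>
      intro k hkd hTk
      have h1 : 0 < x (k + 1) := ih (k + 1) (by omega) (by omega)
      have hk1 : (k + 1) ∉ crossSet x := hnc (k + 1) (by omega) (by omega)
      by_contra hc
      push_neg at hc
      exact hk1 ⟨by omega, Or.inl ⟨by simpa using h1, by simpa using hc⟩⟩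
  have hxTpos : 0 < x T := hpos T le_rfl hTle
  -- at the crossing T, x (T-1) ≤ 0
  have hxT1 : x (T - 1) ≤ 0 := by
    rcases hTS.2 with ⟨_, h⟩ | ⟨h, _⟩ | ⟨h, _⟩
    · exact h
    · linarith
    · linarith
  have hεT : |M T - M (T - 1)| ≤ ε' := hMM T (T - 1) (by omega) hTN₁
  have hεT' : x T - e T ≤ ε' := by
    have := hMd T hT1
    rw [this] at hεT
    exact (abs_le.1 hεT).2
  -- bound on x T
  have hxT2 : x T ≤ 2 * ε' := by
    rcases eq_or_lt_of_le hxT1 with heq | hlt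
    · -- x (T-1) = 0
      have he : e T = u T := hu T hT1 heq
      have hub : |u T| ≤ ε' := hN₂' T hTN₂
      have := (abs_le.1 hub).2
      linarith
    · have he : e T ≤ 0 := hiv T hT1 hlt
      linarith
  -- apply the growth estimate
  have hkey := key_growth x M α hα0 T ε' (le_of_lt hε') n hTle
    (by
      intro k hk1 hk2
      have hxk : 0 < x (k - 1) := hpos (k - 1) (by omega) (by omega)
      have he := hi k (by omega) hxk
      have hm := hMd k (by omega)
      linarith)
    (by
      intro k hk1 hk2
      have := hMM k T (by omega) (by omega)
      exact (abs_le.1 this).2)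
  have hP : ∏ k ∈ Finset.Ioc T n, (1 + α k) ≤ C := prod_le_expC α hα0 hαsum _
  have hMnT : M n - M T ≤ ε' := by
    have := hMM n T (by omega) (by omega)
    exact (abs_le.1 this).2
  have h1 : (∏ k ∈ Finset.Ioc T n, (1 + α k)) * (x T + 2 * ε') ≤ C * (x T + 2 * ε') :=
    mul_le_mul_of_nonneg_right hP (by linarith)
  have h2 : C * (x T + 2 * ε') ≤ C * (4 * ε') :=
    mul_le_mul_of_nonneg_left (by linarith) (le_of_lt hCpos)
  have h3 : C * (4 * ε') = ε / 2 := by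
    rw [hε'def]
    field_simp
    ring
  linarith

/-- The full pathwise convergence lemma. -/
lemma pathwise (x e u α : ℕ → ℝ) (hα0 : ∀ n, 0 ≤ α n) (hαsum : Summable α)
    (h1 : ∀ n, 1 ≤ n → x (n - 1) ≠ 0 →
      0 ≤ e n / x (n - 1) ∧ e n / x (n - 1) ≤ 1 + α n)
    (hu : ∀ n, 1 ≤ n → x (n - 1) = 0 → e n = u n)
    (hu0 : Filter.Tendsto u atTop (𝓝 0))
    (hM : ∃ L : ℝ, Filter.Tendsto (fun N => ∑ i ∈ Finset.Icc 1 N, (x i - e i)) atTop (𝓝 L))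
    (hcross : (crossSet x).Infinite) :
    Filter.Tendsto x atTop (𝓝 0) := by
  have hcr : ∀ N : ℕ, ∃ T, N ≤ T ∧ T ∈ crossSet x := by
    intro N
    obtain ⟨T, hTS, hT⟩ := hcross.exists_gt N
    exact ⟨T, le_of_lt hT, hTS⟩
  -- the four sign-consequences of (A1)
  have hi : ∀ k, 1 ≤ k → 0 < x (k - 1) → e k ≤ (1 + α k) * x (k - 1) := by
    intro k hk hx
    have h := (h1 k hk (ne_of_gt hx)).2
    exact (div_le_iff₀ hx).1 h
  have hii : ∀ k, 1 ≤ k → x (k - 1) < 0 → (1 + α k) * x (k - 1) ≤ e k := by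
    intro k hk hx
    have h := (h1 k hk (ne_of_lt hx)).2
    exact (div_le_iff_of_neg hx).1 h
  have hiii : ∀ k, 1 ≤ k → 0 < x (k - 1) → 0 ≤ e k := by
    intro k hk hx
    have h := (h1 k hk (ne_of_gt hx)).1
    have : e k = e k / x (k - 1) * x (k - 1) := (div_mul_cancel₀ _ (ne_of_gt hx)).symm
    rw [this]
    exact mul_nonneg h (le_of_lt hx)
  have hiv : ∀ k, 1 ≤ k → x (k - 1) < 0 → e k ≤ 0 := by
    intro k hk hx
    have h := (h1 k hk (ne_of_lt hx)).1
    have : e k = e k / x (k - 1) * x (k - 1) := (div_mul_cancel₀ _ (ne_of_lt hx)).symm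
    rw [this]
    exact mul_nonpos_of_nonneg_of_nonpos h (le_of_lt hx)
  rw [Metric.tendsto_atTop]
  intro ε hε
  obtain ⟨Na, hNa⟩ := pos_half x e u α hα0 hαsum hi hiv hu hu0 hM hcr ε hε
  obtain ⟨Nb, hNb⟩ := pos_half (fun n => -x n) (fun n => -e n) (fun n => -u n) α hα0 hαsum
    (by
      intro k hk hx
      simp only [neg_pos] at hx
      have := hii k hk hx
      show -e k ≤ (1 + α k) * -x (k - 1)
      nlinarith)
    (by
      intro k hk hx
      simp only [neg_lt_zero] at hx
      have := hiii k hk hx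
      show -e k ≤ 0
      linarith)
    (by
      intro k hk hx
      simp only [neg_eq_zero] at hx
      have := hu k hk hx
      show -e k = -u k
      rw [this])
    (by simpa using hu0.neg)
    (by
      obtain ⟨L, hL⟩ := hM
      refine ⟨-L, ?_⟩
      have : (fun N => ∑ i ∈ Finset.Icc 1 N, (-x i - -e i)) =
          fun N => -∑ i ∈ Finset.Icc 1 N, (x i - e i) := by
        funext N
        rw [← Finset.sum_neg_distrib]
        congr 1
        funext i
        ring
      rw [this]
      simpa using hL.neg)
    (by rw [crossSet_neg]; exact hcr)
    ε hε
  refine ⟨max Na Nb, fun n hn => ?_⟩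
  rw [Real.dist_eq, sub_zero, abs_lt]
  constructor
  · have := hNb n (le_trans (le_max_right _ _) hn)
    linarith
  · exact hNa n (le_trans (le_max_left _ _) hn)

/-- Theorem 1 (iv): under (A1), (A3) and (A4), `X_n · 1{N_T = ∞}` converges to
zero a.e. -/
theorem stmt3 {Ω : Type*} {m : MeasurableSpace Ω} {μ : Measure Ω} [IsProbabilityMeasure μ]
    (ℱ : Filtration ℕ m) (X : ℕ → Ω → ℝ)
    (hadpt : Adapted ℱ X) (hint : ∀ n, Integrable (X n) μ)
    -- (A1)
    (α : ℕ → ℝ) (hα0 : ∀ n, 0 ≤ α n) (hαsum : Summable α)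
    (hA1 : ∀ n, 1 ≤ n → ∀ᵐ ω ∂μ, X (n - 1) ω ≠ 0 →
      0 ≤ (μ[X n | ℱ (n - 1)]) ω / X (n - 1) ω ∧
        (μ[X n | ℱ (n - 1)]) ω / X (n - 1) ω ≤ 1 + α n)
    -- `U_n`
    (U : ℕ → Ω → ℝ)
    (hU : ∀ n, 1 ≤ n → ∀ ω,
      U n ω = (μ[X n | ℱ (n - 1)]) ω * (if X (n - 1) ω = 0 then (1 : ℝ) else 0))
    -- (A3)
    (hA3 : ∀ᵐ ω ∂μ, Tendsto (fun n => U n ω) atTop (𝓝 0))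
    -- (A4)
    (hA4 : ∀ᵐ ω ∂μ, ∃ L : ℝ, Tendsto
      (fun N => ∑ i ∈ Finset.Icc 1 N, (X i ω - (μ[X i | ℱ (i - 1)]) ω)) atTop (𝓝 L)) :
    ∀ᵐ ω ∂μ, Tendsto
      (fun n => X n ω * (if {i : ℕ | 1 ≤ i ∧ Crossing X i ω}.Infinite then (1 : ℝ) else 0))
      atTop (𝓝 0) := by
  have hA1' : ∀ᵐ ω ∂μ, ∀ n, 1 ≤ n → X (n - 1) ω ≠ 0 →
      0 ≤ (μ[X n | ℱ (n - 1)]) ω / X (n - 1) ω ∧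
        (μ[X n | ℱ (n - 1)]) ω / X (n - 1) ω ≤ 1 + α n := by
    rw [MeasureTheory.ae_all_iff]
    intro n
    rcases Nat.lt_or_ge n 1 with h | h
    · exact Filter.Eventually.of_forall fun ω h' => absurd h' (by omega)
    · filter_upwards [hA1 n h] with ω hω _
      exact hω
  filter_upwards [hA1', hA3, hA4] with ω hω1 hω3 hω4
  by_cases hinf : {i : ℕ | 1 ≤ i ∧ Crossing X i ω}.Infinite
  · simp only [if_pos hinf, mul_one]
    have hcs : (crossSet (fun n => X n ω)).Infinite := hinf
    refine pathwise (fun n => X n ω) (fun n => (μ[X n | ℱ (n - 1)]) ω)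
      (fun n => U n ω) α hα0 hαsum hω1 ?_ hω3 hω4 hcs
    intro k hk hx
    have h := hU k hk ω
    show (μ[X k | ℱ (k - 1)]) ω = U k ω
    have hx' : X (k - 1) ω = 0 := hx
    rw [h, if_pos hx', mul_one]
  · simp only [if_neg hinf, mul_zero]
    exact tendsto_const_nhds
end

section
/- If assumptions (B1)–(B7) hold, then the stochastic approximation process X_n = X_{n−1} − α_n U_n converges to the root x* almost everywhere. -/
open MeasureTheory Filter Topology

lemma det_conv (x d α : ℕ → ℝ) (g : ℝ → ℝ) (Eg : Set ℝ) (xstar : ℝ)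
    (mc Mc : ℝ) (hm : 0 < mc) (hmM : mc ≤ Mc) (hg0 : g xstar = 0)
    (hB3 : ∀ z ∈ Eg, z ≠ xstar → mc ≤ g z / (z - xstar) ∧ g z / (z - xstar) ≤ Mc)
    (hα0 : ∀ n, 0 ≤ α n) (hαlim : Tendsto α atTop (𝓝 0))
    (hαsum : Tendsto (fun N => ∑ i ∈ Finset.range N, α i) atTop atTop)
    (L : ℝ) (hL : Tendsto (fun N => ∑ i ∈ Finset.Icc 1 N, α i * d i) atTop (𝓝 L))
    (hmem : ∀ n, 1 ≤ n → x n ∈ Eg)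
    (hrec : ∀ n, 1 ≤ n → x n = x (n - 1) - α n * (g (x (n - 1)) + d n)) :
    Tendsto x atTop (𝓝 xstar) := by
  have hMc : 0 < Mc := lt_of_lt_of_le hm hmM
  set s : ℕ → ℝ := fun N => ∑ i ∈ Finset.Icc 1 N, α i * d i with hs
  set r : ℕ → ℝ := fun n => L - s n with hrdef
  have hr : Tendsto r atTop (𝓝 0) := by
    have := (tendsto_const_nhds (x := L) (f := atTop (α := ℕ))).sub hL
    simpa using this
  -- step identity for s
  have hsstep : ∀ n : ℕ, s (n + 1) = s n + α (n + 1) * d (n + 1) := by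
    intro n
    simp only [hs]
    rw [Finset.sum_Icc_succ_top (Nat.le_add_left 1 n)]
  -- the multiplier c
  set c : ℕ → ℝ := fun n => if x (n - 1) = xstar then mc else g (x (n - 1)) / (x (n - 1) - xstar)
    with hcdef
  have hc1 : ∀ n, 2 ≤ n → mc ≤ c n ∧ c n ≤ Mc := by
    intro n hn
    have hx : x (n - 1) ∈ Eg := hmem _ (by omega)
    by_cases h : x (n - 1) = xstar
    · simp [hcdef, h, hmM, le_refl]
    · simpa [hcdef, h] using hB3 _ hx h
  have hc2 : ∀ n, 2 ≤ n → g (x (n - 1)) = c n * (x (n - 1) - xstar) := by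
    intro n hn
    by_cases h : x (n - 1) = xstar
    · simp [hcdef, h, hg0]
    · have hne : x (n - 1) - xstar ≠ 0 := sub_ne_zero.2 h
      simp [hcdef, h]
      field_simp
  set β : ℕ → ℝ := fun n => α n * c n with hβdef
  set w : ℕ → ℝ := fun n => (x n - xstar) - r n with hwdef
  -- recursion for w
  have hwrec : ∀ n, 2 ≤ n → w n = (1 - β n) * w (n - 1) - β n * r (n - 1) := by
    intro n hn
    obtain ⟨k, rfl⟩ : ∃ k, n = k + 1 := ⟨n - 1, by omega⟩
    have h1 := hrec (k + 1) (by omega)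
    have h2 := hc2 (k + 1) hn
    have h3 := hsstep k
    simp only [Nat.add_sub_cancel] at h1 h2 ⊢
    simp only [hwdef, hβdef, hrdef]
    rw [h1, h2, h3]
    ring
  -- eventual bounds on β
  have hβlb : ∀ n, 2 ≤ n → mc * α n ≤ β n := by
    intro n hn
    have := (hc1 n hn).1
    have := hα0 n
    simp only [hβdef]
    nlinarith
  have hβub : ∀ n, 2 ≤ n → α n * Mc ≤ 1 → 0 ≤ β n ∧ β n ≤ 1 := by
    intro n hn h1
    have h2 := (hc1 n hn).1
    have h3 := (hc1 n hn).2
    have h4 := hα0 n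
    constructor
    · simp only [hβdef]; nlinarith
    · simp only [hβdef]; nlinarith
  -- w → 0
  have hw0 : Tendsto w atTop (𝓝 0) := by
    rw [NormedAddCommGroup.tendsto_nhds_zero]
    intro ε hε
    have hε2 : 0 < ε / 2 := by positivity
    -- N₀ : α n * Mc ≤ 1 eventually
    have hev0 : ∀ᶠ n in atTop, α n * Mc ≤ 1 := by
      have : ∀ᶠ n in atTop, α n < 1 / Mc := by
        have := hαlim (Iio_mem_nhds (show (0:ℝ) < 1 / Mc by positivity))
        simpa using this
      filter_upwards [this] with n hn
      rw [← le_div_iff₀ hMc]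
      exact hn.le
    have hev1 : ∀ᶠ n in atTop, |r n| ≤ ε / 2 := by
      have := hr (Metric.closedBall_mem_nhds 0 hε2)
      simpa [Real.norm_eq_abs, Metric.mem_closedBall, Real.dist_eq] using this
    obtain ⟨N₁, hN₁⟩ := ((hev0.and hev1).and (eventually_ge_atTop 2)).exists_forall_of_atTop
    have hN₁2 : 2 ≤ N₁ := (hN₁ N₁ le_rfl).2
    -- for n ≥ N₁: |w n| ≤ ε/2 + (∏ i ∈ Icc (N₁+1) n, (1 - β i)) * |w N₁|
    have key : ∀ n, N₁ ≤ n → |w n| ≤ ε / 2 + (∏ i ∈ Finset.Icc (N₁+1) n, (1 - β i)) * |w N₁| := by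
      intro n hn
      induction n, hn using Nat.le_induction with
      | base => simp; positivity
      | succ n hn ih =>
        have hβn := hβub (n+1) (by omega)
          ((hN₁ (n+1) (by omega)).1.1)
        have hrn : |r n| ≤ ε / 2 := (hN₁ n hn).1.2
        have hrec1 := hwrec (n+1) (by omega)
        simp only [Nat.add_sub_cancel] at hrec1
        have hprod0 : (0:ℝ) ≤ ∏ i ∈ Finset.Icc (N₁+1) n, (1 - β i) := by
          apply Finset.prod_nonneg
          intro i hi
          simp only [Finset.mem_Icc] at hi
          have := hβub i (by omega) ((hN₁ i (by omega)).1.1)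
          linarith [this.2]
        have hstep : |w (n+1)| ≤ (1 - β (n+1)) * |w n| + β (n+1) * (ε / 2) := by
          rw [hrec1]
          calc |(1 - β (n+1)) * w n - β (n+1) * r n|
              ≤ |(1 - β (n+1)) * w n| + |β (n+1) * r n| := abs_sub _ _
            _ = (1 - β (n+1)) * |w n| + β (n+1) * |r n| := by
                rw [abs_mul, abs_mul, abs_of_nonneg (by linarith [hβn.2]),
                  abs_of_nonneg hβn.1]
            _ ≤ (1 - β (n+1)) * |w n| + β (n+1) * (ε / 2) := by
                have h1 : 0 ≤ β (n+1) := hβn.1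
                nlinarith
        rw [Finset.prod_Icc_succ_top (by omega)]
        have h1mβ : 0 ≤ 1 - β (n+1) := by linarith [hβn.2]
        calc |w (n+1)| ≤ (1 - β (n+1)) * |w n| + β (n+1) * (ε / 2) := hstep
          _ ≤ (1 - β (n+1)) * (ε / 2 + (∏ i ∈ Finset.Icc (N₁+1) n, (1 - β i)) * |w N₁|)
              + β (n+1) * (ε / 2) := by nlinarith [abs_nonneg (w n)]
          _ = ε / 2 + (∏ i ∈ Finset.Icc (N₁+1) n, (1 - β i)) * (1 - β (n+1)) * |w N₁| := by ring
    -- product bound and tendsto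
    have hTsum : Tendsto (fun n => ∑ i ∈ Finset.Icc (N₁+1) n, β i) atTop atTop := by
      have hA : Tendsto (fun n : ℕ => mc * ((∑ i ∈ Finset.range (n+1), α i)
          - ∑ i ∈ Finset.range (N₁+1), α i)) atTop atTop := by
        apply Tendsto.const_mul_atTop hm
        apply Tendsto.atTop_add _ tendsto_const_nhds
        exact hαsum.comp (tendsto_add_atTop_nat 1)
      apply tendsto_atTop_mono' _ _ hA
      filter_upwards [eventually_ge_atTop N₁] with n hn
      have heq : ∑ i ∈ Finset.Icc (N₁+1) n, α i
          = (∑ i ∈ Finset.range (n+1), α i) - ∑ i ∈ Finset.range (N₁+1), α i := by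
        rw [← Finset.sum_Ico_eq_sub _ (by omega : N₁+1 ≤ n+1), Finset.Ico_add_one_right_eq_Icc]
      calc mc * ((∑ i ∈ Finset.range (n+1), α i) - ∑ i ∈ Finset.range (N₁+1), α i)
          = mc * ∑ i ∈ Finset.Icc (N₁+1) n, α i := by rw [heq]
        _ = ∑ i ∈ Finset.Icc (N₁+1) n, mc * α i := Finset.mul_sum _ _ _
        _ ≤ ∑ i ∈ Finset.Icc (N₁+1) n, β i := by
            apply Finset.sum_le_sum
            intro i hi
            simp only [Finset.mem_Icc] at hi
            exact hβlb i (by omega)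
    have hexp : Tendsto (fun n => Real.exp (-(∑ i ∈ Finset.Icc (N₁+1) n, β i)) * |w N₁|)
        atTop (𝓝 0) := by
      have : Tendsto (fun n => Real.exp (-(∑ i ∈ Finset.Icc (N₁+1) n, β i))) atTop (𝓝 0) :=
        Real.tendsto_exp_atBot.comp (tendsto_neg_atTop_atBot.comp hTsum)
      simpa using this.mul_const |w N₁|
    have hevsmall : ∀ᶠ n in atTop,
        Real.exp (-(∑ i ∈ Finset.Icc (N₁+1) n, β i)) * |w N₁| < ε / 2 := by
      have := hexp (Iio_mem_nhds hε2)
      filter_upwards [this] with n hn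
      simpa using hn
    filter_upwards [hevsmall, eventually_ge_atTop N₁] with n hsmall hn
    have hprodle : (∏ i ∈ Finset.Icc (N₁+1) n, (1 - β i))
        ≤ Real.exp (-(∑ i ∈ Finset.Icc (N₁+1) n, β i)) := by
      have heq2 : Real.exp (-(∑ i ∈ Finset.Icc (N₁+1) n, β i))
          = ∏ i ∈ Finset.Icc (N₁+1) n, Real.exp (-(β i)) := by
        rw [← Real.exp_sum, Finset.sum_neg_distrib]
      rw [heq2]
      apply Finset.prod_le_prod
      · intro i hi
        simp only [Finset.mem_Icc] at hi
        have := hβub i (by omega) ((hN₁ i (by omega)).1.1)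
        linarith [this.2]
      · intro i hi
        linarith [Real.add_one_le_exp (-(β i))]
    have hprod0 : (0:ℝ) ≤ ∏ i ∈ Finset.Icc (N₁+1) n, (1 - β i) := by
      apply Finset.prod_nonneg
      intro i hi
      simp only [Finset.mem_Icc] at hi
      have := hβub i (by omega) ((hN₁ i (by omega)).1.1)
      linarith [this.2]
    have := key n hn
    have hwle : |w n| ≤ ε / 2 + Real.exp (-(∑ i ∈ Finset.Icc (N₁+1) n, β i)) * |w N₁| := by
      have := mul_le_mul_of_nonneg_right hprodle (abs_nonneg (w N₁))
      linarith [key n hn]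
    calc ‖w n‖ = |w n| := rfl
      _ ≤ ε / 2 + Real.exp (-(∑ i ∈ Finset.Icc (N₁+1) n, β i)) * |w N₁| := hwle
      _ < ε / 2 + ε / 2 := by linarith
      _ = ε := by ring
  -- conclude
  have : Tendsto (fun n => w n + r n + xstar) atTop (𝓝 (0 + 0 + xstar)) :=
    (hw0.add hr).add tendsto_const_nhds
  simp only [zero_add] at this
  apply this.congr
  intro n
  simp [hwdef, hrdef]

/-- Theorem 2: under (B1)-(B7) the stochastic approximation process
`X_n = X_{n-1} - α_n U_n` converges to the root `x*` a.e. -/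
theorem stmt4 {Ω : Type*} {mΩ : MeasurableSpace Ω} {μ : Measure Ω} [IsProbabilityMeasure μ]
    (ℱ : Filtration ℕ mΩ)
    (X : ℕ → Ω → ℝ) (U : ℕ → Ω → ℝ) (α : ℕ → ℝ)
    (g : ℝ → ℝ) (Eg : Set ℝ) (xstar : ℝ)
    (hadpt : Adapted ℱ X)
    (hUmeas : ∀ n, 1 ≤ n → StronglyMeasurable[ℱ n] (U n))
    (hUint : ∀ n, 1 ≤ n → Integrable (U n) μ)
    -- the algorithm
    (halg : ∀ n, 1 ≤ n → ∀ ω, X n ω = X (n - 1) ω - α n * U n ω)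
    -- (B1)
    (hB1 : xstar ∈ Eg ∧ g xstar = 0)
    -- (B2)
    (hB2 : ∀ n, 1 ≤ n → ∀ᵐ ω ∂μ, X n ω ∈ Eg)
    -- (B3)
    (mc Mc : ℝ) (hm : 0 < mc) (hmM : mc ≤ Mc) -- `Mc < ∞` is automatic for reals
    (hB3 : ∀ x ∈ Eg, x ≠ xstar → mc ≤ g x / (x - xstar) ∧ g x / (x - xstar) ≤ Mc)
    -- (B4)
    (hα0 : ∀ n, 0 ≤ α n) (hαlim : Tendsto α atTop (𝓝 0))
    -- (B5)
    (hB5 : ∀ᵐ ω ∂μ, ∃ L : ℝ, Tendsto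
      (fun N => ∑ i ∈ Finset.Icc 1 N, α i * (U i ω - (μ[U i | ℱ (i - 1)]) ω))
      atTop (𝓝 L))
    -- (B6)
    (hB6 : ¬ Summable α)
    -- (B7)
    (hB7 : ∀ n, 1 ≤ n → (μ[U n | ℱ (n - 1)]) =ᵐ[μ] fun ω => g (X (n - 1) ω)) :
    ∀ᵐ ω ∂μ, Tendsto (fun n => X n ω) atTop (𝓝 xstar) := by

  have hαsum : Tendsto (fun N => ∑ i ∈ Finset.range N, α i) atTop atTop :=
    (not_summable_iff_tendsto_nat_atTop_of_nonneg hα0).1 hB6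
  have hB2' : ∀ᵐ ω ∂μ, ∀ n, 1 ≤ n → X n ω ∈ Eg := by
    rw [ae_all_iff]
    intro n
    by_cases h : 1 ≤ n
    · filter_upwards [hB2 n h] with ω hω _; exact hω
    · filter_upwards with ω hn; exact absurd hn h
  have hB7' : ∀ᵐ ω ∂μ, ∀ n, 1 ≤ n → (μ[U n | ℱ (n - 1)]) ω = g (X (n - 1) ω) := by
    rw [ae_all_iff]
    intro n
    by_cases h : 1 ≤ n
    · filter_upwards [hB7 n h] with ω hω _; exact hω
    · filter_upwards with ω hn; exact absurd hn h
  filter_upwards [hB2', hB7', hB5] with ω h2 h7 h5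
  obtain ⟨L, hL⟩ := h5
  exact det_conv (fun n => X n ω) (fun n => U n ω - (μ[U n | ℱ (n - 1)]) ω) α g Eg xstar
    mc Mc hm hmM hB1.2 hB3 hα0 hαlim hαsum L hL (fun n hn => h2 n hn)
    (fun n hn => by rw [halg n hn ω, h7 n hn]; ring)
end

section
/- Suppose X = (X_n)_{n≥0} satisfies (D1) for all δ > 0 a.e., and in addition (D4), (A3) and (A4). Then X_n possesses a finite limit almost everywhere as n → ∞. -/
open MeasureTheory Filter Topology
open scoped Classical

/-- Oscillation of partial sums of a converging series is eventually small. -/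
lemma oscSmall (f : ℕ → ℝ)
    (h : ∃ L, Tendsto (fun n => ∑ j ∈ Finset.Ioc 0 n, f j) atTop (𝓝 L))
    (ε : ℝ) (hε : 0 < ε) :
    ∃ M, ∀ s t, M ≤ s → s ≤ t → |∑ j ∈ Finset.Ioc s t, f j| ≤ ε := by
  obtain ⟨L, hL⟩ := h
  obtain ⟨M, hM⟩ := Metric.tendsto_atTop.1 hL (ε / 2) (by positivity)
  refine ⟨M, fun s t hs hst => ?_⟩
  have h1 := hM s hs
  have h2 := hM t (le_trans hs hst)
  rw [Real.dist_eq] at h1 h2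
  have hsum : ∑ j ∈ Finset.Ioc s t, f j =
      (∑ j ∈ Finset.Ioc 0 t, f j) - (∑ j ∈ Finset.Ioc 0 s, f j) := by
    rw [← Finset.sum_Ioc_consecutive f (Nat.zero_le s) hst]; ring
  rw [hsum]
  have : (∑ j ∈ Finset.Ioc 0 t, f j) - (∑ j ∈ Finset.Ioc 0 s, f j)
      = ((∑ j ∈ Finset.Ioc 0 t, f j) - L) - ((∑ j ∈ Finset.Ioc 0 s, f j) - L) := by ring
  rw [this]
  calc |((∑ j ∈ Finset.Ioc 0 t, f j) - L) - ((∑ j ∈ Finset.Ioc 0 s, f j) - L)|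
      ≤ |(∑ j ∈ Finset.Ioc 0 t, f j) - L| + |(∑ j ∈ Finset.Ioc 0 s, f j) - L| :=
        abs_sub _ _
    _ ≤ ε := by linarith

/-- Key bound along a "run": if `x` satisfies an almost-multiplicative recursion with
additive errors whose partial sums are small, then `x t` is controlled by `x s`. -/
lemma runBound (x e a : ℕ → ℝ) (s t : ℕ) (hst : s ≤ t) (ε A : ℝ) (hε : 0 ≤ ε)
    (ha0 : ∀ j, 0 ≤ a j) (hA : ∑ j ∈ Finset.Ioc s t, a j ≤ A) (hA2 : A ≤ 1 / 2)
    (hE : ∀ u, s ≤ u → u ≤ t → |∑ j ∈ Finset.Ioc s u, e j| ≤ ε)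
    (hxs : 0 ≤ x s)
    (hrec : ∀ j, s < j → j ≤ t → x j ≤ (1 + a j) * x (j - 1) + e j) :
    x t ≤ (1 + 2 * A) * (x s + ε) := by
  set P : ℕ → ℝ := fun u => ∏ i ∈ Finset.Ioc s u, (1 + a i) with hPdef
  have hP1 : ∀ u, 1 ≤ P u := by
    intro u
    show (1:ℝ) ≤ ∏ i ∈ Finset.Ioc s u, (1 + a i)
    have h := Finset.prod_le_prod (f := fun _ : ℕ => (1:ℝ)) (g := fun i => 1 + a i)
      (s := Finset.Ioc s u) (fun i _ => zero_le_one)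
      (fun i _ => by show (1:ℝ) ≤ 1 + a i; linarith [ha0 i])
    simpa using h
  have hPpos : ∀ u, 0 < P u := fun u => lt_of_lt_of_le one_pos (hP1 u)
  have hPsucc : ∀ u, s ≤ u → P (u + 1) = P u * (1 + a (u + 1)) := fun u hu =>
    Finset.prod_Ioc_succ_top hu _
  set c : ℕ → ℝ := fun u => (P u)⁻¹ with hcdef
  have hcpos : ∀ u, 0 < c u := fun u => inv_pos.2 (hPpos u)
  have hc1 : ∀ u, c u ≤ 1 := fun u => inv_le_one_of_one_le₀ (hP1 u)
  have hcs : c s = 1 := by simp [hcdef, hPdef]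
  have hcsucc : ∀ u, s ≤ u → (1 + a (u + 1)) * c (u + 1) = c u := by
    intro u hu
    have h1 : (0:ℝ) < 1 + a (u + 1) := by linarith [ha0 (u + 1)]
    show (1 + a (u + 1)) * (P (u + 1))⁻¹ = (P u)⁻¹
    rw [hPsucc u hu, mul_inv, mul_comm (P u)⁻¹, ← mul_assoc,
      mul_inv_cancel₀ h1.ne', one_mul]
  have hcmono : ∀ u, s ≤ u → c (u + 1) ≤ c u := by
    intro u hu
    have := hcsucc u hu
    nlinarith [hcpos (u + 1), ha0 (u + 1)]
  set S : ℕ → ℝ := fun u => ∑ j ∈ Finset.Ioc s u, e j with hSdef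
  set corr : ℕ → ℝ := fun u => ∑ j ∈ Finset.Ioc s u, e j * c j with hcorrdef
  have key : ∀ d : ℕ, s + d ≤ t →
      x (s + d) * c (s + d) ≤ x s + corr (s + d) ∧
        |corr (s + d) - S (s + d) * c (s + d)| ≤ ε * (1 - c (s + d)) := by
    intro d
    induction d with
    | zero =>
      intro _
      constructor
      · simp [hcs, hcorrdef]
      · simp [hcs, hcorrdef, hSdef]
    | succ d ih =>
      intro h
      have h' : s + d ≤ t := by omega
      obtain ⟨ih1, ih2⟩ := ih h'
      set u := s + d with hu
      have hsu : s ≤ u := Nat.le_add_right _ _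
      have hidx : s + (d + 1) = u + 1 := by omega
      rw [hidx]
      have hu1t : u + 1 ≤ t := by omega
      have hx : x (u + 1) ≤ (1 + a (u + 1)) * x u + e (u + 1) := by
        have := hrec (u + 1) (by omega) (by omega)
        simpa using this
      have hcorr : corr (u + 1) = corr u + e (u + 1) * c (u + 1) :=
        Finset.sum_Ioc_succ_top hsu _
      have hS : S (u + 1) = S u + e (u + 1) :=
        Finset.sum_Ioc_succ_top hsu _
      constructor
      · calc x (u + 1) * c (u + 1)
            ≤ ((1 + a (u + 1)) * x u + e (u + 1)) * c (u + 1) :=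
              mul_le_mul_of_nonneg_right hx (hcpos _).le
          _ = x u * ((1 + a (u + 1)) * c (u + 1)) + e (u + 1) * c (u + 1) := by ring
          _ = x u * c u + e (u + 1) * c (u + 1) := by rw [hcsucc u hsu]
          _ ≤ (x s + corr u) + e (u + 1) * c (u + 1) := by linarith
          _ = x s + corr (u + 1) := by rw [hcorr]; ring
      · have hrw : corr (u + 1) - S (u + 1) * c (u + 1)
            = (corr u - S u * c u) + S u * (c u - c (u + 1)) := by
          rw [hcorr, hS]; ring
        have hSu : |S u| ≤ ε := hE u hsu (by omega)
        have hdiff : 0 ≤ c u - c (u + 1) := sub_nonneg.2 (hcmono u hsu)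
        have habs2 : |S u * (c u - c (u + 1))| ≤ ε * (c u - c (u + 1)) := by
          rw [abs_mul, abs_of_nonneg hdiff]
          exact mul_le_mul_of_nonneg_right hSu hdiff
        rw [hrw]
        calc |(corr u - S u * c u) + S u * (c u - c (u + 1))|
            ≤ |corr u - S u * c u| + |S u * (c u - c (u + 1))| := abs_add_le _ _
          _ ≤ ε * (1 - c u) + ε * (c u - c (u + 1)) := add_le_add ih2 habs2
          _ = ε * (1 - c (u + 1)) := by ring
  have hts : s + (t - s) = t := by omega
  obtain ⟨k1, k2⟩ := key (t - s) (by omega)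
  rw [hts] at k1 k2
  have hSt : |S t| ≤ ε := hE t hst le_rfl
  have hcorrt : corr t ≤ ε := by
    have h1 := (abs_le.1 k2).2
    have h2 := (abs_le.1 hSt).2
    have h3 : S t * c t ≤ ε * c t :=
      mul_le_mul_of_nonneg_right h2 (hcpos t).le
    nlinarith [hc1 t, hcpos t]
  have hxt : x t * c t ≤ x s + ε := le_trans k1 (by linarith)
  have hA0 : 0 ≤ A :=
    le_trans (Finset.sum_nonneg fun i _ => ha0 i) hA
  have hPt : P t ≤ 1 + 2 * A := by
    have h1 : P t ≤ Real.exp (∑ j ∈ Finset.Ioc s t, a j) := by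
      rw [Real.exp_sum]
      refine Finset.prod_le_prod (fun i _ => by linarith [ha0 i]) (fun i _ => ?_)
      have := Real.add_one_le_exp (a i)
      linarith
    have h2 : Real.exp (∑ j ∈ Finset.Ioc s t, a j) ≤ Real.exp A := Real.exp_le_exp.2 hA
    have h3 : Real.exp A ≤ 1 + 2 * A := by
      have hneg := Real.add_one_le_exp (-A)
      have hprod : Real.exp A * Real.exp (-A) = 1 := by
        rw [← Real.exp_add]; simp
      nlinarith [Real.exp_pos A]
    linarith
  have hxrw : x t = (x t * c t) * P t := by
    have : c t * P t = 1 := inv_mul_cancel₀ (hPpos t).ne'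
    calc x t = x t * (c t * P t) := by rw [this]; ring
      _ = (x t * c t) * P t := by ring
  calc x t = (x t * c t) * P t := hxrw
    _ ≤ (x s + ε) * P t := mul_le_mul_of_nonneg_right hxt (hPpos t).le
    _ ≤ (x s + ε) * (1 + 2 * A) := by
        apply mul_le_mul_of_nonneg_left hPt (by linarith)
    _ = (1 + 2 * A) * (x s + ε) := mul_comm _ _

/-- If the sequence enters the small region `(-∞, δ]`-crossing at `n₀`, then it stays
bounded above afterwards. -/
lemma caseI_upper (x e a : ℕ → ℝ) (δ ε κ' : ℝ) (n₀ : ℕ)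
    (hδ : 0 < δ) (hε : 0 < ε)
    (ha0 : ∀ j, 0 ≤ a j)
    (hA : ∀ s t, n₀ ≤ s → s ≤ t → ∑ j ∈ Finset.Ioc s t, a j ≤ 1 / 2)
    (hE : ∀ s t, n₀ ≤ s → s ≤ t → |∑ j ∈ Finset.Ioc s t, e j| ≤ ε)
    (hsmall : ∀ n, n₀ < n → x (n - 1) ≤ δ → x n ≤ κ' + ε)
    (hrec : ∀ n, n₀ < n → δ < x (n - 1) → x n ≤ (1 + a n) * x (n - 1) + e n)
    (hstart : x n₀ ≤ δ) :
    ∀ m, n₀ ≤ m → x m ≤ max δ (2 * (κ' + 2 * ε)) := by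
  intro m hm
  by_cases hxm : x m ≤ δ
  · exact le_trans hxm (le_max_left _ _)
  push_neg at hxm
  refine le_trans ?_ (le_max_right _ _)
  set s := Nat.findGreatest (fun j => x j ≤ δ) m with hsdef
  have hs0 : n₀ ≤ s := Nat.le_findGreatest hm hstart
  have hsm : s ≤ m := Nat.findGreatest_le m
  have hxs : x s ≤ δ := Nat.findGreatest_spec (P := fun j => x j ≤ δ) hm hstart
  have hgt : ∀ j, s < j → j ≤ m → δ < x j := by
    intro j hj hjm
    have h := Nat.findGreatest_is_greatest (P := fun j => x j ≤ δ) hj hjm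
    exact not_le.1 h
  have hsm' : s < m := by
    rcases lt_or_eq_of_le hsm with h | h
    · exact h
    · exfalso; rw [h] at hxs; linarith
  have hx1 : x (s + 1) ≤ κ' + ε := by
    have := hsmall (s + 1) (by omega) (by simpa using hxs)
    exact this
  by_cases h1m : s + 1 = m
  · have hpos : δ < x m := hxm
    rw [← h1m]
    have : δ < x (s + 1) := by rw [h1m]; exact hpos
    nlinarith
  · have hs1m : s + 1 ≤ m := by omega
    have hpos1 : δ < x (s + 1) := hgt (s + 1) (by omega) hs1m
    have hrb := runBound x e a (s + 1) m hs1m ε (1 / 2) hε.le ha0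
      (hA (s + 1) m (by omega) hs1m) le_rfl
      (fun u hu hum => hE (s + 1) u (by omega) hu)
      (by linarith)
      (fun j hj hjm => hrec j (by omega) (hgt (j - 1) (by omega) (by omega)))
    nlinarith

/-- Convergence in the case where the sequence stays above `δ > 0` forever. -/
lemma caseII (x e a : ℕ → ℝ) (δ : ℝ) (N : ℕ) (hδ : 0 < δ)
    (ha0 : ∀ j, 0 ≤ a j)
    (haosc : ∀ ε, 0 < ε → ∃ M, ∀ s t, M ≤ s → s ≤ t → ∑ j ∈ Finset.Ioc s t, a j ≤ ε)
    (heosc : ∀ ε, 0 < ε → ∃ M, ∀ s t, M ≤ s → s ≤ t → |∑ j ∈ Finset.Ioc s t, e j| ≤ ε)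
    (hpos : ∀ n, N ≤ n → δ < x n)
    (hrec : ∀ n, N < n → x n ≤ (1 + a n) * x (n - 1) + e n) :
    ∃ L, Tendsto x atTop (𝓝 L) := by
  obtain ⟨M1, hM1⟩ := haosc (1 / 2) (by norm_num)
  obtain ⟨M2, hM2⟩ := heosc 1 one_pos
  set M0 := max (max M1 M2) (N + 1) with hM0def
  have hM0N : N + 1 ≤ M0 := le_max_right _ _
  have hbdd : ∀ t, M0 ≤ t → x t ≤ (1 + 2 * (1 / 2)) * (x M0 + 1) := by
    intro t ht
    exact runBound x e a M0 t ht 1 (1 / 2) one_pos.le ha0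
      (hM1 M0 t (le_trans (le_max_left _ _) (le_max_left _ _)) ht) le_rfl
      (fun u hu hut => hM2 M0 u (le_trans (le_max_right _ _) (le_max_left _ _)) hu)
      (le_of_lt (lt_trans hδ (hpos M0 (by omega))))
      (fun j hj hjt => hrec j (by omega))
  set B : ℝ := (1 + 2 * (1 / 2)) * (x M0 + 1) with hBdef
  have hBa : IsBoundedUnder (· ≤ ·) atTop x :=
    ⟨B, eventually_map.2 (eventually_atTop.2 ⟨M0, fun t ht => hbdd t ht⟩)⟩
  have hBb : IsBoundedUnder (· ≥ ·) atTop x :=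
    ⟨δ, eventually_map.2 (eventually_atTop.2 ⟨N, fun n hn => (hpos n hn).le⟩)⟩
  set b := limsup x atTop with hbdef
  set aL := liminf x atTop with haLdef
  have hab : aL ≤ b := liminf_le_limsup hBa hBb
  have hδa : δ ≤ aL :=
    le_liminf_of_le hBa.isCoboundedUnder_ge
      (eventually_atTop.2 ⟨N, fun n hn => (hpos n hn).le⟩)
  have key : ∀ ε, 0 < ε → ε ≤ 1 / 2 → b ≤ (1 + 2 * ε) * (aL + 2 * ε) := by
    intro ε hε hε2
    obtain ⟨M1', h1⟩ := haosc ε hε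
    obtain ⟨M2', h2⟩ := heosc ε hε
    set M := max (max M1' M2') (N + 1) with hMdef
    have hfreq : ∃ᶠ n in atTop, x n < aL + ε :=
      frequently_lt_of_liminf_lt hBa.isCoboundedUnder_ge (by linarith)
    obtain ⟨s, hxslt, hsM⟩ := (hfreq.and_eventually (eventually_ge_atTop M)).exists
    have hspos : δ < x s := hpos s (by omega)
    have hev : ∀ᶠ t in atTop, x t ≤ (1 + 2 * ε) * (aL + 2 * ε) := by
      refine eventually_atTop.2 ⟨s, fun t ht => ?_⟩
      have hrb := runBound x e a s t ht ε ε hε.le ha0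
        (h1 s t (le_trans (le_trans (le_max_left _ _) (le_max_left _ _)) hsM) ht) hε2
        (fun u hu hut => h2 s u (le_trans (le_trans (le_max_right _ _) (le_max_left _ _)) hsM) hu)
        (by linarith)
        (fun j hj hjt => hrec j (by omega))
      have : x s + ε ≤ aL + 2 * ε := by linarith
      calc x t ≤ (1 + 2 * ε) * (x s + ε) := hrb
        _ ≤ (1 + 2 * ε) * (aL + 2 * ε) :=
          mul_le_mul_of_nonneg_left this (by linarith)
    exact limsup_le_of_le hBb.isCoboundedUnder_le hev
  have hba : b ≤ aL := by
    by_contra hcon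
    push_neg at hcon
    set η := b - aL with hηdef
    have hη : 0 < η := by simp [hηdef]; linarith
    have hden : (0:ℝ) < 2 * aL + 8 := by linarith
    set ε := min (1 / 2) (η / (2 * aL + 8)) with hεdef
    have hεpos : 0 < ε := lt_min (by norm_num) (div_pos hη hden)
    have hkey := key ε hεpos (min_le_left _ _)
    have hεle : ε ≤ η / (2 * aL + 8) := min_le_right _ _
    have hεle' : ε * (2 * aL + 8) ≤ η := by
      rw [div_eq_mul_inv] at hεle
      calc ε * (2 * aL + 8) ≤ (η * (2 * aL + 8)⁻¹) * (2 * aL + 8) :=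
        mul_le_mul_of_nonneg_right hεle (by linarith)
        _ = η := by field_simp
    have hεhalf : ε ≤ 1 / 2 := min_le_left _ _
    nlinarith
  have heq : aL = b := le_antisymm hab hba
  exact ⟨b, tendsto_of_liminf_eq_limsup heq rfl hBa hBb⟩

/-- Purely pointwise version of the theorem. -/
lemma ptwise (x p : ℕ → ℝ) (α : ℕ → ℕ → ℝ) (K : ℕ → ℝ)
    (hα0 : ∀ k n, 0 ≤ α k n) (hαs : ∀ k, Summable (α k))
    (hK : Tendsto K atTop (𝓝 0))
    (h1 : ∀ (k n : ℕ), 1 ≤ n → 1 / ((k : ℝ) + 1) < |x (n - 1)| →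
      0 ≤ p n / x (n - 1) ∧ p n / x (n - 1) ≤ 1 + α k n)
    (h2 : ∀ (k n : ℕ), 1 ≤ n → 0 < |x (n - 1)| → |x (n - 1)| ≤ 1 / ((k : ℝ) + 1) → |p n| ≤ K k)
    (h3 : Tendsto (fun n => p n * (if x (n - 1) = 0 then (1 : ℝ) else 0)) atTop (𝓝 0))
    (h4 : ∃ L, Tendsto (fun N => ∑ i ∈ Finset.Icc 1 N, (x i - p i)) atTop (𝓝 L)) :
    ∃ L, Tendsto x atTop (𝓝 L) := by
  set e : ℕ → ℝ := fun n => x n - p n with hedef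
  have hxpe : ∀ n, x n = p n + e n := by
    intro n; simp [hedef]
  have hconv : ∀ (f : ℕ → ℝ) n, ∑ j ∈ Finset.range (n + 1), f j
      = f 0 + ∑ j ∈ Finset.Ioc 0 n, f j := by
    intro f n
    induction n with
    | zero => simp
    | succ n ih => rw [Finset.sum_range_succ, ih, Finset.sum_Ioc_succ_top (Nat.zero_le n)]; ring
  have hsingle : ∀ n : ℕ, 1 ≤ n → ∑ j ∈ Finset.Ioc (n - 1) n, e j = e n := by
    intro n hn
    obtain ⟨m, rfl⟩ : ∃ m, n = m + 1 := ⟨n - 1, by omega⟩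
    simp only [Nat.add_sub_cancel]
    rw [Finset.sum_Ioc_succ_top le_rfl]
    simp
  have heexists : ∃ L, Tendsto (fun n => ∑ j ∈ Finset.Ioc 0 n, e j) atTop (𝓝 L) := by
    obtain ⟨L, hL⟩ := h4
    refine ⟨L, hL.congr fun N => ?_⟩
    have hIcc : Finset.Icc 1 N = Finset.Ioc 0 N := by
      ext j; simp only [Finset.mem_Icc, Finset.mem_Ioc]; omega
    simp only [hIcc, hedef]
  have heosc : ∀ ε, 0 < ε → ∃ M, ∀ s t, M ≤ s → s ≤ t →
      |∑ j ∈ Finset.Ioc s t, e j| ≤ ε := oscSmall e heexists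
  have hαosc : ∀ (k : ℕ), ∀ ε, 0 < ε → ∃ M, ∀ s t, M ≤ s → s ≤ t →
      ∑ j ∈ Finset.Ioc s t, α k j ≤ ε := by
    intro k ε hε
    have hz : ∃ L, Tendsto (fun n => ∑ j ∈ Finset.Ioc 0 n, α k j) atTop (𝓝 L) := by
      refine ⟨(∑' j, α k j) - α k 0, ?_⟩
      have h1 : Tendsto (fun n => ∑ j ∈ Finset.range (n + 1), α k j) atTop
          (𝓝 (∑' j, α k j)) := (hαs k).hasSum.tendsto_sum_nat.comp (tendsto_add_atTop_nat 1)
      refine (h1.sub_const (α k 0)).congr fun n => ?_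
      rw [hconv (α k) n]; ring
    obtain ⟨M, hM⟩ := oscSmall (α k) hz ε hε
    exact ⟨M, fun s t hs hst => le_trans (le_abs_self _) (hM s t hs hst)⟩
  have h3' : ∀ ε, 0 < ε → ∃ M, ∀ n, M ≤ n → x (n - 1) = 0 → |p n| ≤ ε := by
    intro ε hε
    obtain ⟨M, hM⟩ := Metric.tendsto_atTop.1 h3 ε hε
    refine ⟨M, fun n hn h0 => ?_⟩
    have h := hM n hn
    rw [Real.dist_eq, sub_zero, if_pos h0, mul_one] at h
    exact h.le
  have hup : ∀ (k n : ℕ), 1 ≤ n → 1 / ((k : ℝ) + 1) < x (n - 1) →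
      0 ≤ p n ∧ p n ≤ (1 + α k n) * x (n - 1) := by
    intro k n hn hx
    have hδpos : (0:ℝ) < 1 / ((k : ℝ) + 1) := by positivity
    have hxpos : 0 < x (n - 1) := lt_trans hδpos hx
    obtain ⟨r1, r2⟩ := h1 k n hn (lt_of_lt_of_le hx (le_abs_self _))
    constructor
    · have h := mul_nonneg r1 hxpos.le
      rwa [div_mul_cancel₀ _ hxpos.ne'] at h
    · have h := (div_le_iff₀ hxpos).1 r2
      nlinarith
  have hdown : ∀ (k n : ℕ), 1 ≤ n → x (n - 1) < -(1 / ((k : ℝ) + 1)) →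
      p n ≤ 0 ∧ (1 + α k n) * x (n - 1) ≤ p n := by
    intro k n hn hx
    have hδpos : (0:ℝ) < 1 / ((k : ℝ) + 1) := by positivity
    have hxneg : x (n - 1) < 0 := by linarith
    have habs : 1 / ((k : ℝ) + 1) < |x (n - 1)| := by
      rw [abs_of_neg hxneg]; linarith
    obtain ⟨r1, r2⟩ := h1 k n hn habs
    constructor
    · have h := mul_nonpos_of_nonneg_of_nonpos r1 hxneg.le
      rwa [div_mul_cancel₀ _ hxneg.ne] at h
    · have h := (div_le_iff_of_neg hxneg).1 r2
      nlinarith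
  by_cases H : ∀ N k : ℕ, ∃ n, N ≤ n ∧ |x n| ≤ 1 / ((k : ℝ) + 1)
  · -- x tends to 0
    refine ⟨0, Metric.tendsto_atTop.2 ?_⟩
    intro η hη
    obtain ⟨k, hk1, hk2⟩ : ∃ k : ℕ, 1 / ((k : ℝ) + 1) < η / 2 ∧ K k < η / 16 := by
      have e1 : ∀ᶠ k : ℕ in atTop, 1 / ((k : ℝ) + 1) < η / 2 :=
        tendsto_one_div_add_atTop_nhds_zero_nat.eventually_lt_const (by positivity)
      have e2 : ∀ᶠ k : ℕ in atTop, K k < η / 16 :=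
        hK.eventually_lt_const (by positivity)
      exact (e1.and e2).exists
    set δ := 1 / ((k : ℝ) + 1) with hδdef
    have hδ : 0 < δ := by positivity
    set ε := η / 16 with hεdef
    have hε : 0 < ε := by positivity
    set κ' := max (K k) 0 + ε with hκ'def
    obtain ⟨Me, hMe⟩ := heosc ε hε
    obtain ⟨Mp, hMp⟩ := h3' ε hε
    obtain ⟨Ma, hMa⟩ := hαosc k (1 / 2) (by norm_num)
    obtain ⟨n₀, hn₀ge, hn₀⟩ := H (max (max Me Mp) Ma) k
    have hMe0 : Me ≤ n₀ := le_trans (le_trans (le_max_left _ _) (le_max_left _ _)) hn₀ge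
    have hMp0 : Mp ≤ n₀ := le_trans (le_trans (le_max_right _ _) (le_max_left _ _)) hn₀ge
    have hMa0 : Ma ≤ n₀ := le_trans (le_max_right _ _) hn₀ge
    have hA' : ∀ s t, n₀ ≤ s → s ≤ t → ∑ j ∈ Finset.Ioc s t, α k j ≤ 1 / 2 :=
      fun s t hs hst => hMa s t (by omega) hst
    have hE' : ∀ s t, n₀ ≤ s → s ≤ t → |∑ j ∈ Finset.Ioc s t, e j| ≤ ε :=
      fun s t hs hst => hMe s t (by omega) hst
    have hen : ∀ n, n₀ < n → |e n| ≤ ε := by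
      intro n hn
      have h1n : (1:ℕ) ≤ n := by omega
      have h := hMe (n - 1) n (by omega) (by omega)
      rwa [hsingle n h1n] at h
    have hsmall_abs : ∀ n, n₀ < n → |x (n - 1)| ≤ δ → |x n| ≤ κ' + ε := by
      intro n hn hxd
      have h1n : (1:ℕ) ≤ n := by omega
      rcases eq_or_ne (x (n - 1)) 0 with h0 | h0
      · have hp := hMp n (by omega) h0
        calc |x n| = |p n + e n| := by rw [hxpe n]
          _ ≤ |p n| + |e n| := abs_add_le _ _
          _ ≤ ε + ε := add_le_add hp (hen n hn)
          _ ≤ κ' + ε := by rw [hκ'def]; linarith [le_max_right (K k) (0:ℝ)]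
      · have habs0 : 0 < |x (n - 1)| := abs_pos.2 h0
        have hp := h2 k n h1n habs0 hxd
        calc |x n| = |p n + e n| := by rw [hxpe n]
          _ ≤ |p n| + |e n| := abs_add_le _ _
          _ ≤ K k + ε := add_le_add hp (hen n hn)
          _ ≤ κ' + ε := by rw [hκ'def]; linarith [le_max_left (K k) (0:ℝ)]
    have hsmall_up : ∀ n, n₀ < n → x (n - 1) ≤ δ → x n ≤ κ' + ε := by
      intro n hn hxd
      have h1n : (1:ℕ) ≤ n := by omega
      rcases lt_or_ge (x (n - 1)) (-δ) with hneg | hge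
      · have hp := (hdown k n h1n hneg).1
        have hee := abs_le.1 (hen n hn)
        have hx := hxpe n
        have hκ'pos : ε ≤ κ' := by
          rw [hκ'def]; linarith [le_max_right (K k) (0:ℝ)]
        linarith [hee.2]
      · have hd : |x (n - 1)| ≤ δ := abs_le.2 ⟨by linarith, hxd⟩
        exact le_trans (le_abs_self _) (hsmall_abs n hn hd)
    have hsmall_down : ∀ n, n₀ < n → -x (n - 1) ≤ δ → -x n ≤ κ' + ε := by
      intro n hn hxd
      have h1n : (1:ℕ) ≤ n := by omega
      rcases lt_or_ge δ (x (n - 1)) with hpos | hle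
      · have hp := (hup k n h1n hpos).1
        have hee := abs_le.1 (hen n hn)
        have hx := hxpe n
        have hκ'pos : ε ≤ κ' := by
          rw [hκ'def]; linarith [le_max_right (K k) (0:ℝ)]
        linarith [hee.1]
      · have hd : |x (n - 1)| ≤ δ := abs_le.2 ⟨by linarith, hle⟩
        exact le_trans (neg_le_abs _) (hsmall_abs n hn hd)
    have hrec_up : ∀ n, n₀ < n → δ < x (n - 1) → x n ≤ (1 + α k n) * x (n - 1) + e n := by
      intro n hn hx
      have h1n : (1:ℕ) ≤ n := by omega
      have h := (hup k n h1n hx).2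
      have := hxpe n
      linarith
    have hrec_down : ∀ n, n₀ < n → δ < -x (n - 1) →
        -x n ≤ (1 + α k n) * (-x (n - 1)) + (-e n) := by
      intro n hn hx
      have h1n : (1:ℕ) ≤ n := by omega
      have h := (hdown k n h1n (by linarith)).2
      have := hxpe n
      nlinarith
    have hE'neg : ∀ s t, n₀ ≤ s → s ≤ t → |∑ j ∈ Finset.Ioc s t, (-e j)| ≤ ε := by
      intro s t hs hst
      rw [Finset.sum_neg_distrib, abs_neg]
      exact hE' s t hs hst
    have hb1 := caseI_upper x e (α k) δ ε κ' n₀ hδ hε (hα0 k) hA' hE'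
      hsmall_up hrec_up (le_trans (le_abs_self _) hn₀)
    have hb2 := caseI_upper (fun n => -x n) (fun n => -e n) (α k) δ ε κ' n₀ hδ hε (hα0 k)
      hA' hE'neg hsmall_down hrec_down (le_trans (neg_le_abs _) hn₀)
    refine ⟨n₀, fun m hm => ?_⟩
    have hu := hb1 m hm
    have hd := hb2 m hm
    rw [Real.dist_eq, sub_zero]
    have habsm : |x m| ≤ max δ (2 * (κ' + 2 * ε)) := by
      rw [abs_le]
      constructor
      · have : -x m ≤ max δ (2 * (κ' + 2 * ε)) := hd
        linarith
      · exact hu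
    have hlt : max δ (2 * (κ' + 2 * ε)) < η := by
      apply max_lt
      · linarith
      · have hmx : max (K k) 0 < η / 16 := max_lt hk2 (by positivity)
        rw [hκ'def, hεdef]
        linarith
    exact lt_of_le_of_lt habsm hlt
  · push_neg at H
    obtain ⟨N, k, hNk⟩ := H
    set δ := 1 / ((k : ℝ) + 1) with hδdef
    have hδ : 0 < δ := by positivity
    obtain ⟨M2, hM2⟩ := heosc (δ / 2) (by positivity)
    set N' := max N M2 with hN'def
    have hen : ∀ n, N' ≤ n → |e (n + 1)| ≤ δ / 2 := by
      intro n hn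
      have hM2n : M2 ≤ n := le_trans (le_max_right _ _) hn
      have h := hM2 n (n + 1) (by omega) (by omega)
      have hs := hsingle (n + 1) (by omega)
      rw [Nat.add_sub_cancel] at hs
      rwa [hs] at h
    have habs' : ∀ n, N' ≤ n → δ < |x n| := by
      intro n hn
      exact hNk n (le_trans (le_max_left _ _) hn)
    have hsign : (∀ n, N' ≤ n → δ < x n) ∨ (∀ n, N' ≤ n → δ < -x n) := by
      rcases lt_abs.1 (habs' N' le_rfl) with h | h
      · left
        intro n hn
        induction n, hn using Nat.le_induction with
        | base => exact h
        | succ n hn ih =>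
          have h1n : (1:ℕ) ≤ n + 1 := by omega
          have hp : 0 ≤ p (n + 1) := (hup k (n + 1) h1n ih).1
          have hee := abs_le.1 (hen n hn)
          have hx := hxpe (n + 1)
          have hlow : -δ < x (n + 1) := by linarith [hee.1]
          rcases lt_abs.1 (habs' (n + 1) (by omega)) with h' | h'
          · exact h'
          · linarith
      · right
        intro n hn
        induction n, hn using Nat.le_induction with
        | base => exact h
        | succ n hn ih =>
          have h1n : (1:ℕ) ≤ n + 1 := by omega
          have hxn : x n < -δ := by linarith
          have hp : p (n + 1) ≤ 0 := (hdown k (n + 1) h1n hxn).1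
          have hee := abs_le.1 (hen n hn)
          have hx := hxpe (n + 1)
          have hhigh : x (n + 1) < δ := by linarith [hee.2]
          rcases lt_abs.1 (habs' (n + 1) (by omega)) with h' | h'
          · linarith
          · exact h'
    rcases hsign with hs | hs
    · refine caseII x e (α k) δ N' hδ (hα0 k) (hαosc k) heosc hs ?_
      intro n hn
      have h1n : (1:ℕ) ≤ n := by omega
      have h := (hup k n h1n (hs (n - 1) (by omega))).2
      have := hxpe n
      linarith
    · have heoscneg : ∀ ε, 0 < ε → ∃ M, ∀ s t, M ≤ s → s ≤ t →
          |∑ j ∈ Finset.Ioc s t, (-e j)| ≤ ε := by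
        intro ε hε
        obtain ⟨M, hM⟩ := heosc ε hε
        exact ⟨M, fun s t hsM hst => by
          rw [Finset.sum_neg_distrib, abs_neg]; exact hM s t hsM hst⟩
      have hrecneg : ∀ n, N' < n →
          -x n ≤ (1 + α k n) * (-x (n - 1)) + (-e n) := by
        intro n hn
        have h1n : (1:ℕ) ≤ n := by omega
        have hxn : x (n - 1) < -δ := by linarith [hs (n - 1) (by omega : N' ≤ n - 1)]
        have h := (hdown k n h1n hxn).2
        have := hxpe n
        nlinarith
      obtain ⟨L, hL⟩ := caseII (fun n => -x n) (fun n => -e n) (α k) δ N' hδ (hα0 k)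
        (hαosc k) heoscneg hs hrecneg
      exact ⟨-L, by simpa using hL.neg⟩

/-- Theorem 4 (first part): if `X` satisfies (D1) for all `δ > 0`, together with
(D4), (A3) and (A4), then `X_n` possesses a finite limit a.e. -/
theorem stmt9 {Ω : Type*} {mΩ : MeasurableSpace Ω} {μ : Measure Ω} [IsProbabilityMeasure μ]
    (ℱ : Filtration ℕ mΩ) (X : ℕ → Ω → ℝ)
    (hadpt : Adapted ℱ X) (hint : ∀ n, Integrable (X n) μ)
    -- (D1) for all δ > 0
    (hD1 : ∀ δ : ℝ, 0 < δ → ∃ α : ℕ → ℝ, (∀ n, 0 ≤ α n) ∧ Summable α ∧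
      ∀ n, 1 ≤ n → ∀ᵐ ω ∂μ, (δ < |X (n - 1) ω| ∧ X (n - 1) ω ≠ 0) →
        0 ≤ (μ[X n | ℱ (n - 1)]) ω / X (n - 1) ω ∧
          (μ[X n | ℱ (n - 1)]) ω / X (n - 1) ω ≤ 1 + α n)
    -- (D4)
    (κ : ℝ → ℝ)
    (hD4 : ∀ δ : ℝ, 0 < δ → ∀ n, 1 ≤ n → ∀ᵐ ω ∂μ,
      (0 < |X (n - 1) ω| ∧ |X (n - 1) ω| ≤ δ) → |(μ[X n | ℱ (n - 1)]) ω| ≤ κ δ)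
    (hκ : Tendsto κ (𝓝[>] 0) (𝓝 0))
    -- (A3)
    (hA3 : ∀ᵐ ω ∂μ, Tendsto
      (fun n => (μ[X n | ℱ (n - 1)]) ω * (if X (n - 1) ω = 0 then (1 : ℝ) else 0))
      atTop (𝓝 0))
    -- (A4)
    (hA4 : ∀ᵐ ω ∂μ, ∃ L : ℝ, Tendsto
      (fun N => ∑ i ∈ Finset.Icc 1 N, (X i ω - (μ[X i | ℱ (i - 1)]) ω)) atTop (𝓝 L)) :
    ∀ᵐ ω ∂μ, ∃ L : ℝ, Tendsto (fun n => X n ω) atTop (𝓝 L) := by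
  have hδk : ∀ k : ℕ, (0:ℝ) < 1 / ((k : ℝ) + 1) := fun k => by positivity
  choose α hα0 hαs hα3 using fun k : ℕ => hD1 (1 / ((k : ℝ) + 1)) (hδk k)
  have h1ae : ∀ᵐ ω ∂μ, ∀ (k n : ℕ), 1 ≤ n →
      (1 / ((k : ℝ) + 1) < |X (n - 1) ω| ∧ X (n - 1) ω ≠ 0) →
      0 ≤ (μ[X n | ℱ (n - 1)]) ω / X (n - 1) ω ∧
        (μ[X n | ℱ (n - 1)]) ω / X (n - 1) ω ≤ 1 + α k n := by
    rw [ae_all_iff]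
    intro k
    rw [ae_all_iff]
    intro n
    by_cases hn : 1 ≤ n
    · filter_upwards [hα3 k n hn] with ω h
      exact fun _ => h
    · exact Filter.Eventually.of_forall (fun ω h => absurd h hn)
  have h2ae : ∀ᵐ ω ∂μ, ∀ (k n : ℕ), 1 ≤ n →
      (0 < |X (n - 1) ω| ∧ |X (n - 1) ω| ≤ 1 / ((k : ℝ) + 1)) →
      |(μ[X n | ℱ (n - 1)]) ω| ≤ κ (1 / ((k : ℝ) + 1)) := by
    rw [ae_all_iff]
    intro k
    rw [ae_all_iff]
    intro n
    by_cases hn : 1 ≤ n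
    · filter_upwards [hD4 (1 / ((k : ℝ) + 1)) (hδk k) n hn] with ω h
      exact fun _ => h
    · exact Filter.Eventually.of_forall (fun ω h => absurd h hn)
  have hKlim : Tendsto (fun k : ℕ => κ (1 / ((k : ℝ) + 1))) atTop (𝓝 0) := by
    refine hκ.comp ?_
    refine tendsto_nhdsWithin_iff.2 ⟨?_, Filter.Eventually.of_forall fun k => hδk k⟩
    exact tendsto_one_div_add_atTop_nhds_zero_nat
  filter_upwards [h1ae, h2ae, hA3, hA4] with ω H1 H2 H3 H4
  refine ptwise (fun n => X n ω) (fun n => (μ[X n | ℱ (n - 1)]) ω) α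
    (fun k => κ (1 / ((k : ℝ) + 1))) hα0 hαs hKlim ?_ ?_ H3 H4
  · intro k n hn habs
    have habs' : 1 / ((k : ℝ) + 1) < |X (n - 1) ω| := habs
    have hne : X (n - 1) ω ≠ 0 := by
      intro h0
      rw [h0, abs_zero] at habs'
      exact absurd habs' (not_lt.2 (hδk k).le)
    exact H1 k n hn ⟨habs', hne⟩
  · intro k n hn h0 hle
    exact H2 k n hn ⟨h0, hle⟩
end

section
/- Suppose X = (X_n)_{n≥0} satisfies (D1) for all δ > 0 a.e., satisfies (D4), (A3) and (A4), and in addition satisfies (D2) for all pairs 0 < δ_1 < δ_2 < ∞. Then X_n converges to zero almost everywhere as n → ∞. -/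
open MeasureTheory Filter Topology
open scoped Classical

open Finset


lemma div_bounds' {a b t : ℝ} (hb : 0 < b) (h0 : 0 ≤ a / b) (h1 : a / b ≤ t) :
    0 ≤ a ∧ a ≤ t * b := by
  constructor
  · have := mul_nonneg h0 hb.le
    rwa [div_mul_cancel₀ _ hb.ne'] at this
  · have := mul_le_mul_of_nonneg_right h1 hb.le
    rwa [div_mul_cancel₀ _ hb.ne'] at this

lemma chainGen (u p : ℕ → ℝ) (m : ℕ) (hp : ∀ n, m < n → 0 ≤ p n) :
    ∀ N, m ≤ N → (∀ n, m ≤ n → n < N → u (n+1) ≤ p (n+1) * u n) →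
      u N ≤ (∏ i ∈ Finset.Ioc m N, p i) * u m := by
  intro N hmN
  induction N, hmN using Nat.le_induction with
  | base => intro _; simp
  | succ N hmN ih =>
    intro h
    have h1 := ih (fun n hn hnN => h n hn (by omega))
    have h2 := h N hmN (by omega)
    calc u (N+1) ≤ p (N+1) * u N := h2
      _ ≤ p (N+1) * ((∏ i ∈ Finset.Ioc m N, p i) * u m) :=
          mul_le_mul_of_nonneg_left h1 (hp _ (by omega))
      _ = (∏ i ∈ Finset.Ioc m (N+1), p i) * u m := by
          rw [Finset.prod_Ioc_succ_top hmN]; ring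

lemma prod_one_add_le (α : ℕ → ℝ) (hα : ∀ n, 0 ≤ α n) (s : Finset ℕ) :
    ∏ i ∈ s, (1 + α i) ≤ Real.exp (∑ i ∈ s, α i) := by
  rw [Real.exp_sum]
  refine Finset.prod_le_prod (fun i _ => by linarith [hα i]) (fun i _ => ?_)
  have := Real.add_one_le_exp (α i)
  linarith

lemma prod_k_zero (k : ℕ → ℝ) (hk0 : ∀ n, 0 ≤ k n) (hk1 : ∀ n, k n ≤ 1)
    (hns : ¬ Summable (fun n => 1 - k n)) (m : ℕ) :
    Tendsto (fun N => ∏ i ∈ Finset.Ioc m N, k i) atTop (𝓝 0) := by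
  have hnn : ∀ i, 0 ≤ 1 - k i := fun i => by linarith [hk1 i]
  have hdiv : Tendsto (fun n => ∑ i ∈ range n, (1 - k i)) atTop atTop :=
    (not_summable_iff_tendsto_nat_atTop_of_nonneg hnn).mp hns
  have hsum : Tendsto (fun N => ∑ i ∈ Finset.Ioc m N, (1 - k i)) atTop atTop := by
    have heq : ∀ N, m ≤ N → ∑ i ∈ Finset.Ioc m N, (1 - k i)
        = ∑ i ∈ range (N+1), (1 - k i) - ∑ i ∈ range (m+1), (1 - k i) := by
      intro N hN
      have hc := Finset.sum_Ico_consecutive (fun i => 1 - k i) (Nat.zero_le (m+1))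
        (by omega : m + 1 ≤ N + 1)
      simp only [Finset.range_eq_Ico]
      rw [← Finset.Ico_add_one_add_one_eq_Ioc]
      linarith [hc]
    have : Tendsto (fun N => ∑ i ∈ range (N+1), (1 - k i) - ∑ i ∈ range (m+1), (1 - k i))
        atTop atTop := (hdiv.comp (tendsto_add_atTop_nat 1)).atTop_add tendsto_const_nhds
    refine this.congr' ?_
    filter_upwards [eventually_ge_atTop m] with N hN using (heq N hN).symm
  have hub : ∀ N, (∏ i ∈ Finset.Ioc m N, k i) ≤ Real.exp (-(∑ i ∈ Finset.Ioc m N, (1 - k i))) := by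
    intro N
    have : ∀ i ∈ Finset.Ioc m N, k i ≤ Real.exp (-(1 - k i)) := by
      intro i _
      have := Real.add_one_le_exp (k i - 1)
      have h2 : -(1 - k i) = k i - 1 := by ring
      rw [h2]; linarith
    calc (∏ i ∈ Finset.Ioc m N, k i) ≤ ∏ i ∈ Finset.Ioc m N, Real.exp (-(1 - k i)) :=
          Finset.prod_le_prod (fun i _ => hk0 i) this
      _ = Real.exp (∑ i ∈ Finset.Ioc m N, -(1 - k i)) := (Real.exp_sum _ _).symm
      _ = Real.exp (-(∑ i ∈ Finset.Ioc m N, (1 - k i))) := by rw [Finset.sum_neg_distrib]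
  have hexp : Tendsto (fun N => Real.exp (-(∑ i ∈ Finset.Ioc m N, (1 - k i)))) atTop (𝓝 0) :=
    Real.tendsto_exp_atBot.comp (tendsto_neg_atBot_iff.mpr hsum)
  exact squeeze_zero (fun N => Finset.prod_nonneg (fun i _ => hk0 i)) hub hexp
lemma pos_block (x c α : ℕ → ℝ) (δ ε' : ℝ) (hδ : 2*ε' ≤ δ)
    (m N : ℕ) (hmN : m ≤ N)
    (hα0 : ∀ n, 0 ≤ α n)
    (hD : ∀ n, 1 ≤ n → δ < x (n-1) → 0 ≤ c n ∧ c n ≤ (1 + α n) * x (n-1))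
    (hT : ∀ n, m ≤ n → n ≤ N → |∑ i ∈ Finset.Ioc m n, (x i - c i)| ≤ ε')
    (hx0 : δ < x m)
    (habs : ∀ n, m < n → n < N → δ < |x n|) :
    (∀ n, m ≤ n → n < N → δ < x n) ∧
      x N ≤ (∏ i ∈ Finset.Ioc m N, (1 + α i)) * (x m + ε') := by
  have hD' : ∀ n, m ≤ n → n < N → δ < x n → 0 ≤ c (n+1) ∧ c (n+1) ≤ (1 + α (n+1)) * x n := by
    intro n _ _ hx
    have := hD (n+1) (by omega) (by simpa using hx)
    simpa using this
  have hpos : ∀ n, m ≤ n → n < N → δ < x n := by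
    intro n hmn
    induction n, hmn using Nat.le_induction with
    | base => intro _; exact hx0
    | succ n hmn ih =>
      intro hn1N
      have hxn : δ < x n := ih (by omega)
      have hc := (hD' n hmn (by omega) hxn).1
      have hsum : (∑ i ∈ Finset.Ioc m (n+1), (x i - c i))
          = (∑ i ∈ Finset.Ioc m n, (x i - c i)) + (x (n+1) - c (n+1)) :=
        Finset.sum_Ioc_succ_top hmn _
      have hT1 := hT n hmn (by omega)
      have hT2 := hT (n+1) (by omega) (by omega)
      have hlow : -δ ≤ x (n+1) := by
        have h1 : -ε' ≤ ∑ i ∈ Finset.Ioc m (n+1), (x i - c i) := by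
          have := abs_le.mp hT2; linarith [this.1]
        have h2 : (∑ i ∈ Finset.Ioc m n, (x i - c i)) ≤ ε' := (abs_le.mp hT1).2
        linarith
      rcases lt_abs.mp (habs (n+1) (by omega) hn1N) with h | h
      · exact h
      · linarith
  refine ⟨hpos, ?_⟩
  have hchain := chainGen (fun n => x n - (∑ i ∈ Finset.Ioc m n, (x i - c i)) + ε')
    (fun n => 1 + α n) m (fun n _ => by show (0:ℝ) ≤ 1 + α n; linarith [hα0 n]) N hmN ?_
  · have hTN := (abs_le.mp (hT N hmN le_rfl)).2
    have hIm : (∑ i ∈ Finset.Ioc m m, (x i - c i)) = 0 := by simp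
    simp only [hIm] at hchain
    linarith [hchain]
  · intro n hmn hnN
    have hxn := hpos n hmn hnN
    have hc := (hD' n hmn hnN hxn).2
    have hsum : (∑ i ∈ Finset.Ioc m (n+1), (x i - c i))
        = (∑ i ∈ Finset.Ioc m n, (x i - c i)) + (x (n+1) - c (n+1)) :=
      Finset.sum_Ioc_succ_top hmn _
    have hT1 := (abs_le.mp (hT n hmn (by omega))).2
    have hkey : 0 ≤ α (n+1) * (ε' - (∑ i ∈ Finset.Ioc m n, (x i - c i))) :=
      mul_nonneg (hα0 (n+1)) (by linarith)
    nlinarith [hkey]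

lemma k_block (x c k : ℕ → ℝ) (ε' : ℝ)
    (m N : ℕ) (hmN : m ≤ N)
    (hk0 : ∀ n, 0 ≤ k n) (hk1 : ∀ n, k n ≤ 1)
    (hD : ∀ n, m ≤ n → n < N → 0 ≤ c (n+1) ∧ c (n+1) ≤ k (n+1) * x n)
    (hT : ∀ n, m ≤ n → n ≤ N → |∑ i ∈ Finset.Ioc m n, (x i - c i)| ≤ ε') :
    x N ≤ (∏ i ∈ Finset.Ioc m N, k i) * (x m - ε') + 2*ε' := by
  have hchain := chainGen (fun n => x n - (∑ i ∈ Finset.Ioc m n, (x i - c i)) - ε')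
    k m (fun n _ => hk0 n) N hmN ?_
  · have hTN := (abs_le.mp (hT N hmN le_rfl)).2
    have hIm : (∑ i ∈ Finset.Ioc m m, (x i - c i)) = 0 := by simp
    simp only [hIm] at hchain
    linarith [hchain]
  · intro n hmn hnN
    have hc := (hD n hmn hnN).2
    have hsum : (∑ i ∈ Finset.Ioc m (n+1), (x i - c i))
        = (∑ i ∈ Finset.Ioc m n, (x i - c i)) + (x (n+1) - c (n+1)) :=
      Finset.sum_Ioc_succ_top hmn _
    have hT1 := (abs_le.mp (hT n hmn (by omega))).1
    have hkey : 0 ≤ (1 - k (n+1)) * ((∑ i ∈ Finset.Ioc m n, (x i - c i)) + ε') :=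
      mul_nonneg (by linarith [hk1 (n+1)]) (by linarith)
    nlinarith [hkey]
lemma claimB_pos (x c α : ℕ → ℝ) (δ ε' : ℝ) (h2ε : 2*ε' ≤ δ)
    (m₀ m N : ℕ) (hm : m₀ ≤ m) (hmN : m < N)
    (hα0 : ∀ n, 0 ≤ α n)
    (hprod : ∀ a b : ℕ, m₀ ≤ a → a ≤ b → (∏ i ∈ Finset.Ioc a b, (1 + α i)) ≤ 2)
    (hT : ∀ a b : ℕ, m₀ ≤ a → a ≤ b → |∑ i ∈ Finset.Ioc a b, (x i - c i)| ≤ ε')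
    (hD1 : ∀ n, 1 ≤ n → δ < x (n-1) → 0 ≤ c n ∧ c n ≤ (1 + α n) * x (n-1))
    (hxm : δ < x m)
    (hwin : ∀ n, m < n → n < N → δ < |x n|) :
    -(2*ε') ≤ x N ∧ x N ≤ 2*(x m + ε') := by
  obtain ⟨hpos, hbd⟩ := pos_block x c α δ ε' h2ε m N hmN.le hα0 hD1
    (fun n hn hnN => hT m n hm hn) hxm hwin
  obtain ⟨N', rfl⟩ : ∃ N', N = N' + 1 := ⟨N - 1, by omega⟩
  have hxN' : δ < x N' := hpos N' (by omega) (by omega)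
  have hcN : 0 ≤ c (N'+1) := by
    have := hD1 (N'+1) (by omega) (by simpa using hxN')
    simpa using this.1
  have hsum : (∑ i ∈ Finset.Ioc m (N'+1), (x i - c i))
      = (∑ i ∈ Finset.Ioc m N', (x i - c i)) + (x (N'+1) - c (N'+1)) :=
    Finset.sum_Ioc_succ_top (by omega) _
  have h1 := abs_le.mp (hT m N' hm (by omega))
  have h2 := abs_le.mp (hT m (N'+1) hm (by omega))
  constructor
  · linarith [h1.2, h2.1]
  · calc x (N'+1) ≤ (∏ i ∈ Finset.Ioc m (N'+1), (1 + α i)) * (x m + ε') := hbd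
      _ ≤ 2 * (x m + ε') := by
        apply mul_le_mul_of_nonneg_right (hprod m (N'+1) hm (by omega))
        linarith

lemma claimA_pos (x c α : ℕ → ℝ) (δ ε' : ℝ) (hδ0 : 0 < δ) (hε' : 0 < ε') (h4ε : 4*ε' ≤ δ)
    (m₀ m : ℕ) (hm : m₀ ≤ m)
    (hα0 : ∀ n, 0 ≤ α n)
    (hprod : ∀ a b : ℕ, m₀ ≤ a → a ≤ b → (∏ i ∈ Finset.Ioc a b, (1 + α i)) ≤ 2)
    (hT : ∀ a b : ℕ, m₀ ≤ a → a ≤ b → |∑ i ∈ Finset.Ioc a b, (x i - c i)| ≤ ε')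
    (hD1 : ∀ n, 1 ≤ n → δ < x (n-1) → 0 ≤ c n ∧ c n ≤ (1 + α n) * x (n-1))
    (hH2 : ∀ q2 : ℚ, δ < (q2:ℝ) → ∃ k : ℕ → ℝ, (∀ n, 0 ≤ k n ∧ k n ≤ 1) ∧
      (¬ Summable (fun n => 1 - k n)) ∧ ∀ n, 1 ≤ n → δ < |x (n-1)| → |x (n-1)| < (q2:ℝ) →
        0 ≤ c n / x (n-1) ∧ c n / x (n-1) ≤ k n)
    (hesc : ∀ n, m ≤ n → δ < |x n|)
    (hxm : δ < x m) : False := by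
  have h2ε : 2*ε' ≤ δ := by linarith
  have hpos : ∀ n, m ≤ n → δ < x n := by
    intro n hn
    exact (pos_block x c α δ ε' h2ε m (n+1) (by omega) hα0 hD1
      (fun a ha haN => hT m a hm ha) hxm (fun a ha haN => hesc a (by omega))).1 n hn (by omega)
  have hbd : ∀ n, m ≤ n → x n ≤ 2*(x m + ε') := by
    intro n hn
    have := (pos_block x c α δ ε' h2ε m n hn hα0 hD1
      (fun a ha haN => hT m a hm ha) hxm (fun a ha haN => hesc a (by omega))).2
    calc x n ≤ (∏ i ∈ Finset.Ioc m n, (1 + α i)) * (x m + ε') := this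
      _ ≤ 2 * (x m + ε') := by
        apply mul_le_mul_of_nonneg_right (hprod m n hm hn); linarith
  obtain ⟨q2, hq2⟩ := exists_rat_gt (2*(x m + ε'))
  have hδq2 : δ < (q2:ℝ) := by linarith [hbd m le_rfl]
  obtain ⟨k, hk01, hkns, P2⟩ := hH2 q2 hδq2
  have hDk : ∀ n, m ≤ n → n < (0:ℕ) + 1 + n + 1 → 0 ≤ c (n+1) ∧ c (n+1) ≤ k (n+1) * x n := by
    intro n hn _
    have hx := hpos n hn
    have habs : |x n| = x n := abs_of_pos (by linarith)
    have := P2 (n+1) (by omega) (by simpa [habs] using hesc n hn)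
      (by simp only [Nat.add_sub_cancel, habs]; linarith [hbd n hn, hq2])
    simp only [Nat.add_sub_cancel] at this
    exact div_bounds' (by linarith : (0:ℝ) < x n) this.1 this.2
  have hklim := prod_k_zero k (fun n => (hk01 n).1) (fun n => (hk01 n).2) hkns m
  have htar : 0 < (δ - 2*ε') / (x m - ε') := by
    apply div_pos (by linarith) (by linarith)
  obtain ⟨N, hN1, hN2⟩ := ((hklim.eventually (gt_mem_nhds htar)).and (eventually_ge_atTop m)).exists
  have hkb := k_block x c k ε' m N hN2 (fun n => (hk01 n).1) (fun n => (hk01 n).2)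
    (fun n hn hnN => hDk n hn (by omega)) (fun n hn hnN => hT m n hm hn)
  have hmul : (∏ i ∈ Finset.Ioc m N, k i) * (x m - ε') < δ - 2*ε' :=
    (lt_div_iff₀ (by linarith)).mp hN1
  have := hpos N hN2
  linarith
set_option maxHeartbeats 1000000 in
lemma det_main (x c : ℕ → ℝ)
    (H1 : ∀ q : ℚ, 0 < (q:ℝ) → ∃ α : ℕ → ℝ, (∀ n, 0 ≤ α n) ∧ Summable α ∧
      ∀ n, 1 ≤ n → (q:ℝ) < |x (n-1)| → 0 ≤ c n / x (n-1) ∧ c n / x (n-1) ≤ 1 + α n)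
    (H2 : ∀ q1 q2 : ℚ, 0 < (q1:ℝ) → (q1:ℝ) < (q2:ℝ) → ∃ k : ℕ → ℝ,
      (∀ n, 0 ≤ k n ∧ k n ≤ 1) ∧ (¬ Summable (fun n => 1 - k n)) ∧
      ∀ n, 1 ≤ n → (q1:ℝ) < |x (n-1)| → |x (n-1)| < (q2:ℝ) →
        0 ≤ c n / x (n-1) ∧ c n / x (n-1) ≤ k n)
    (H4 : ∀ ε : ℝ, 0 < ε → ∃ q : ℚ, 0 < (q:ℝ) ∧ (q:ℝ) < ε ∧
      ∀ n, 1 ≤ n → 0 < |x (n-1)| → |x (n-1)| ≤ (q:ℝ) → |c n| ≤ ε)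
    (H3 : Tendsto (fun n => c n * (if x (n-1) = 0 then (1:ℝ) else 0)) atTop (𝓝 0))
    (HA4 : ∃ L : ℝ, Tendsto (fun N => ∑ i ∈ Finset.Icc 1 N, (x i - c i)) atTop (𝓝 L)) :
    Tendsto x atTop (𝓝 0) := by
  obtain ⟨L, hL⟩ := HA4
  rw [Metric.tendsto_atTop]
  intro ε hε
  suffices h : ∃ m, ∀ n, m ≤ n → |x n| ≤ ε/2 by
    obtain ⟨m, hm⟩ := h
    exact ⟨m, fun n hn => by rw [Real.dist_eq, sub_zero]; linarith [hm n hn]⟩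
  set ε₁ := ε/16 with hε₁def
  have hε₁ : 0 < ε₁ := by positivity
  obtain ⟨qδ, hq0, hqε, P4⟩ := H4 ε₁ hε₁
  set δ := (qδ:ℝ) with hδdef
  obtain ⟨α, hα0, hαsum, P1⟩ := H1 qδ hq0
  set ε' := δ/8 with hε'def
  have hε'0 : 0 < ε' := by positivity
  -- thresholds
  obtain ⟨m₃, P3⟩ := Metric.tendsto_atTop.mp H3 ε₁ hε₁
  have hS : CauchySeq (fun N => ∑ i ∈ Finset.Icc 1 N, (x i - c i)) := hL.cauchySeq
  obtain ⟨m₁, hm₁⟩ := Metric.cauchySeq_iff.mp hS ε' hε'0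
  have hA : CauchySeq (fun N => ∑ i ∈ Finset.range N, α i) :=
    hαsum.hasSum.tendsto_sum_nat.cauchySeq
  obtain ⟨m₂, hm₂⟩ := Metric.cauchySeq_iff.mp hA (Real.log 2) (Real.log_pos (by norm_num))
  set m₀ := max (max m₁ m₂) m₃ with hm₀def
  -- partial sum over Ioc as difference
  have hIoc : ∀ a b : ℕ, a ≤ b → (∑ i ∈ Finset.Ioc a b, (x i - c i))
      = (∑ i ∈ Finset.Icc 1 b, (x i - c i)) - (∑ i ∈ Finset.Icc 1 a, (x i - c i)) := by
    intro a b hab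
    have h1 : ∀ t : ℕ, Finset.Icc 1 t = Finset.Ioc 0 t := fun t => rfl
    rw [h1, h1]
    have := Finset.sum_Ioc_consecutive (fun i => x i - c i) (Nat.zero_le a) hab
    linarith
  have hTfact : ∀ a b : ℕ, m₀ ≤ a → a ≤ b → |∑ i ∈ Finset.Ioc a b, (x i - c i)| ≤ ε' := by
    intro a b ha hab
    rw [hIoc a b hab]
    have := hm₁ b (by omega) a (by omega)
    rw [Real.dist_eq] at this
    exact this.le
  have hprodfact : ∀ a b : ℕ, m₀ ≤ a → a ≤ b → (∏ i ∈ Finset.Ioc a b, (1 + α i)) ≤ 2 := by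
    intro a b ha hab
    have h1 : (∑ i ∈ Finset.Ioc a b, α i) ≤ Real.log 2 := by
      have heq : (∑ i ∈ Finset.Ioc a b, α i)
          = (∑ i ∈ Finset.range (b+1), α i) - (∑ i ∈ Finset.range (a+1), α i) := by
        have hc := Finset.sum_Ico_consecutive α (Nat.zero_le (a+1)) (by omega : a+1 ≤ b+1)
        simp only [Finset.range_eq_Ico]
        rw [← Finset.Ico_add_one_add_one_eq_Ioc]
        linarith
      have := hm₂ (b+1) (by omega) (a+1) (by omega)
      rw [Real.dist_eq] at this
      have h2 := (abs_lt.mp this).2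
      linarith [heq]
    calc (∏ i ∈ Finset.Ioc a b, (1 + α i)) ≤ Real.exp (∑ i ∈ Finset.Ioc a b, α i) :=
        prod_one_add_le α hα0 _
      _ ≤ Real.exp (Real.log 2) := Real.exp_le_exp.mpr h1
      _ = 2 := Real.exp_log (by norm_num)
  -- one-sided D1 facts
  have hD1pos : ∀ n, 1 ≤ n → δ < x (n-1) → 0 ≤ c n ∧ c n ≤ (1 + α n) * x (n-1) := by
    intro n hn hx
    have habs : δ < |x (n-1)| := lt_of_lt_of_le hx (le_abs_self _)
    have := P1 n hn habs
    exact div_bounds' (by linarith : (0:ℝ) < x (n-1)) this.1 this.2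
  have hD1neg : ∀ n, 1 ≤ n → δ < -(x (n-1)) → 0 ≤ -(c n) ∧ -(c n) ≤ (1 + α n) * (-(x (n-1))) := by
    intro n hn hx
    have habs : δ < |x (n-1)| := lt_of_lt_of_le hx (neg_le_abs _)
    have := P1 n hn habs
    have hdiv : c n / x (n-1) = (-(c n)) / (-(x (n-1))) := (neg_div_neg_eq _ _).symm
    rw [hdiv] at this
    exact div_bounds' (by linarith : (0:ℝ) < -(x (n-1))) this.1 this.2
  have hTneg : ∀ a b : ℕ, m₀ ≤ a → a ≤ b →
      |∑ i ∈ Finset.Ioc a b, ((fun n => -(x n)) i - (fun n => -(c n)) i)| ≤ ε' := by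
    intro a b ha hab
    have : (∑ i ∈ Finset.Ioc a b, ((fun n => -(x n)) i - (fun n => -(c n)) i))
        = -(∑ i ∈ Finset.Ioc a b, (x i - c i)) := by
      rw [← Finset.sum_neg_distrib]
      apply Finset.sum_congr rfl
      intro i _; ring
    rw [this, abs_neg]
    exact hTfact a b ha hab
  -- Claim A : no escape
  have hA : ∀ m, m₀ ≤ m → ∃ n, m ≤ n ∧ |x n| ≤ δ := by
    intro m hm
    by_contra hcon
    push_neg at hcon
    have hesc : ∀ n, m ≤ n → δ < |x n| := fun n hn => hcon n hn
    rcases lt_abs.mp (hesc m le_rfl) with hpos | hneg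
    · exact claimA_pos x c α δ ε' hq0 hε'0 (by linarith) m₀ m hm hα0 hprodfact hTfact hD1pos
        (fun q2 hq2 => by
          obtain ⟨k, h1, h2, h3⟩ := H2 qδ q2 hq0 hq2
          exact ⟨k, h1, h2, h3⟩) hesc hpos
    · apply claimA_pos (fun n => -(x n)) (fun n => -(c n)) α δ ε' hq0 hε'0 (by linarith)
        m₀ m hm hα0 hprodfact hTneg hD1neg
        (fun q2 hq2 => by
          obtain ⟨k, h1, h2, h3⟩ := H2 qδ q2 hq0 hq2
          refine ⟨k, h1, h2, fun n hn ha hb => ?_⟩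
          simp only [abs_neg] at ha hb
          have := h3 n hn ha hb
          rwa [← neg_div_neg_eq] at this)
        (fun n hn => by simpa using hesc n hn) hneg
  -- Claim B : once small, stays small
  have hB : ∀ m, m₀ ≤ m → |x m| ≤ δ → ∀ N, m ≤ N → |x N| ≤ ε/2 := by
    intro m hm hxm N hmN
    by_cases hsm : |x N| ≤ δ
    · linarith
    push_neg at hsm
    have hmN' : m < N := by
      rcases eq_or_lt_of_le hmN with rfl | h
      · exact absurd hxm (not_le.mpr hsm)
      · exact h
    -- last small index before N
    have hTne : ((Finset.Ico m N).filter (fun i => |x i| ≤ δ)).Nonempty :=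
      ⟨m, by simp [Finset.mem_Ico, hmN', hxm]⟩
    obtain ⟨m', hm'mem, hm'max⟩ : ∃ m' ∈ (Finset.Ico m N).filter (fun i => |x i| ≤ δ),
        ∀ i ∈ (Finset.Ico m N).filter (fun i => |x i| ≤ δ), i ≤ m' :=
      ⟨_, Finset.max'_mem _ hTne, fun i hi => Finset.le_max' _ i hi⟩
    simp only [Finset.mem_filter, Finset.mem_Ico] at hm'mem
    obtain ⟨⟨hmm', hm'N⟩, hxm'⟩ := hm'mem
    have hwin : ∀ i, m' < i → i < N → δ < |x i| := by
      intro i h1 h2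
      by_contra hcc
      push_neg at hcc
      have hiT : i ∈ (Finset.Ico m N).filter (fun i => |x i| ≤ δ) := by
        simp only [Finset.mem_filter, Finset.mem_Ico]
        exact ⟨⟨by omega, h2⟩, hcc⟩
      have := hm'max i hiT
      omega
    have hm₀m' : m₀ ≤ m' := le_trans hm hmm'
    -- one-step bound on x (m'+1)
    have hc1 : |c (m'+1)| ≤ ε₁ := by
      by_cases hx0 : x m' = 0
      · have := P3 (m'+1) (by omega)
        rw [Real.dist_eq, sub_zero] at this
        have hif : x ((m'+1) - 1) = 0 := by simpa using hx0
        simp only [hif, if_pos, mul_one] at this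
        exact this.le
      · have := P4 (m'+1) (by omega) (by simpa using abs_pos.mpr hx0)
          (by simpa using hxm')
        simpa using this
    have he1 : |x (m'+1) - c (m'+1)| ≤ ε' := by
      have := hTfact m' (m'+1) hm₀m' (by omega)
      have hsum : (∑ i ∈ Finset.Ioc m' (m'+1), (x i - c i)) = x (m'+1) - c (m'+1) := by
        rw [Finset.sum_Ioc_succ_top le_rfl]
        simp
      rwa [hsum] at this
    have hx1 : |x (m'+1)| ≤ ε₁ + ε' := by
      calc |x (m'+1)| = |c (m'+1) + (x (m'+1) - c (m'+1))| := by ring_nf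
        _ ≤ |c (m'+1)| + |x (m'+1) - c (m'+1)| := abs_add_le _ _
        _ ≤ ε₁ + ε' := add_le_add hc1 he1
    rcases eq_or_lt_of_le (show m'+1 ≤ N by omega) with heq | hlt
    · rw [← heq]
      have : ε₁ + ε' ≤ ε/2 := by
        rw [hε'def, hε₁def]
        have : δ < ε/16 := hqε
        linarith
      linarith [hx1]
    · -- m'+1 < N, use sign cases
      have hxx : δ < |x (m'+1)| := hwin (m'+1) (by omega) hlt
      have hεfin : 2*(ε₁ + ε' + ε') ≤ ε/2 ∧ 2*ε' ≤ ε/2 := by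
        constructor
        · rw [hε'def, hε₁def]
          have : δ < ε/16 := hqε
          linarith
        · rw [hε'def]
          have : δ < ε/16 := hqε
          linarith
      rcases lt_abs.mp hxx with hp | hn
      · obtain ⟨hlow, hup⟩ := claimB_pos x c α δ ε' (by linarith) m₀ (m'+1) N
          (by omega) hlt hα0 hprodfact hTfact hD1pos hp
          (fun i h1 h2 => hwin i (by omega) h2)
        have hxup : x (m'+1) ≤ ε₁ + ε' := le_trans (le_abs_self _) hx1
        rw [abs_le]
        exact ⟨by linarith [hεfin.1, hεfin.2], by linarith [hεfin.1, hεfin.2]⟩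
      · obtain ⟨hlow, hup⟩ := claimB_pos (fun n => -(x n)) (fun n => -(c n)) α δ ε'
          (by linarith) m₀ (m'+1) N (by omega) hlt hα0 hprodfact hTneg hD1neg hn
          (fun i h1 h2 => by simpa using hwin i (by omega) h2)
        have hlow' : -(2*ε') ≤ -(x N) := hlow
        have hup' : -(x N) ≤ 2*(-(x (m'+1)) + ε') := hup
        have hxup : -(x (m'+1)) ≤ ε₁ + ε' := le_trans (neg_le_abs _) hx1
        rw [abs_le]
        exact ⟨by linarith [hεfin.1, hεfin.2], by linarith [hεfin.1, hεfin.2]⟩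
  obtain ⟨m₄, hm₄1, hm₄2⟩ := hA m₀ le_rfl
  exact ⟨m₄, fun n hn => hB m₄ (le_trans le_rfl hm₄1) hm₄2 n hn⟩


/-- Theorem 4 (second part): if `X` satisfies (D1) for all `δ > 0`, (D4), (A3),
(A4), and in addition (D2) for all pairs `0 < δ₁ < δ₂ < ∞`, then `X_n` converges
to zero a.e. -/
theorem stmt10 {Ω : Type*} {mΩ : MeasurableSpace Ω} {μ : Measure Ω} [IsProbabilityMeasure μ]
    (ℱ : Filtration ℕ mΩ) (X : ℕ → Ω → ℝ)
    (hadpt : Adapted ℱ X) (hint : ∀ n, Integrable (X n) μ)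
    -- (D1) for all δ > 0
    (hD1 : ∀ δ : ℝ, 0 < δ → ∃ α : ℕ → ℝ, (∀ n, 0 ≤ α n) ∧ Summable α ∧
      ∀ n, 1 ≤ n → ∀ᵐ ω ∂μ, (δ < |X (n - 1) ω| ∧ X (n - 1) ω ≠ 0) →
        0 ≤ (μ[X n | ℱ (n - 1)]) ω / X (n - 1) ω ∧
          (μ[X n | ℱ (n - 1)]) ω / X (n - 1) ω ≤ 1 + α n)
    -- (D2) for all pairs 0 < δ₁ < δ₂ < ∞
    (hD2 : ∀ δ₁ δ₂ : ℝ, 0 < δ₁ → δ₁ < δ₂ →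
      ∃ k : ℕ → ℝ, (∀ n, 0 ≤ k n ∧ k n ≤ 1) ∧ (¬ Summable (fun n => 1 - k n)) ∧
        ∀ n, 1 ≤ n → ∀ᵐ ω ∂μ, (δ₁ < |X (n - 1) ω| ∧ |X (n - 1) ω| < δ₂) →
          0 ≤ (μ[X n | ℱ (n - 1)]) ω / X (n - 1) ω ∧
            (μ[X n | ℱ (n - 1)]) ω / X (n - 1) ω ≤ k n)
    -- (D4)
    (κ : ℝ → ℝ)
    (hD4 : ∀ δ : ℝ, 0 < δ → ∀ n, 1 ≤ n → ∀ᵐ ω ∂μ,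
      (0 < |X (n - 1) ω| ∧ |X (n - 1) ω| ≤ δ) → |(μ[X n | ℱ (n - 1)]) ω| ≤ κ δ)
    (hκ : Tendsto κ (𝓝[>] 0) (𝓝 0))
    -- (A3)
    (hA3 : ∀ᵐ ω ∂μ, Tendsto
      (fun n => (μ[X n | ℱ (n - 1)]) ω * (if X (n - 1) ω = 0 then (1 : ℝ) else 0))
      atTop (𝓝 0))
    -- (A4)
    (hA4 : ∀ᵐ ω ∂μ, ∃ L : ℝ, Tendsto
      (fun N => ∑ i ∈ Finset.Icc 1 N, (X i ω - (μ[X i | ℱ (i - 1)]) ω)) atTop (𝓝 L)) :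
    ∀ᵐ ω ∂μ, Tendsto (fun n => X n ω) atTop (𝓝 0) := by

  have hone : ¬ Summable (fun _ : ℕ => (1:ℝ)) := by
    intro h
    have := tendsto_nhds_unique h.tendsto_atTop_zero (tendsto_const_nhds (x := (1:ℝ)))
    norm_num at this
  -- (D1) data, indexed by rationals
  have H1ex : ∀ q : ℚ, ∃ α : ℕ → ℝ, (∀ n, 0 ≤ α n) ∧ Summable α ∧
      ∀ n : ℕ, 1 ≤ n → 0 < (q:ℝ) → ∀ᵐ ω ∂μ, (((q:ℝ) < |X (n-1) ω| ∧ X (n-1) ω ≠ 0) →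
        0 ≤ (μ[X n | ℱ (n-1)]) ω / X (n-1) ω ∧
          (μ[X n | ℱ (n-1)]) ω / X (n-1) ω ≤ 1 + α n) := by
    intro q
    by_cases hq : 0 < (q:ℝ)
    · obtain ⟨α, h1, h2, h3⟩ := hD1 q hq
      exact ⟨α, h1, h2, fun n hn _ => h3 n hn⟩
    · exact ⟨fun _ => 0, fun _ => le_rfl, summable_zero, fun n hn hq' => absurd hq' hq⟩
  choose α hα0 hαsum hαae using H1ex
  have hae1 : ∀ᵐ ω ∂μ, ∀ q : ℚ, ∀ n : ℕ, 1 ≤ n → 0 < (q:ℝ) →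
      (((q:ℝ) < |X (n-1) ω| ∧ X (n-1) ω ≠ 0) →
        0 ≤ (μ[X n | ℱ (n-1)]) ω / X (n-1) ω ∧
          (μ[X n | ℱ (n-1)]) ω / X (n-1) ω ≤ 1 + α q n) := by
    rw [ae_all_iff]
    intro q
    rw [ae_all_iff]
    intro n
    by_cases hn : 1 ≤ n
    · by_cases hq : 0 < (q:ℝ)
      · filter_upwards [hαae q n hn hq] with ω h _ _
        exact h
      · filter_upwards with ω _ hq'
        exact absurd hq' hq
    · filter_upwards with ω hn'
      exact absurd hn' hn
  -- (D2) data, indexed by pairs of rationals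
  have H2ex : ∀ p : ℚ × ℚ, ∃ k : ℕ → ℝ, (∀ n, 0 ≤ k n ∧ k n ≤ 1) ∧
      (¬ Summable (fun n => 1 - k n)) ∧
      ∀ n : ℕ, 1 ≤ n → 0 < (p.1:ℝ) → (p.1:ℝ) < (p.2:ℝ) → ∀ᵐ ω ∂μ,
        (((p.1:ℝ) < |X (n-1) ω| ∧ |X (n-1) ω| < (p.2:ℝ)) →
          0 ≤ (μ[X n | ℱ (n-1)]) ω / X (n-1) ω ∧
            (μ[X n | ℱ (n-1)]) ω / X (n-1) ω ≤ k n) := by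
    intro p
    by_cases hp : 0 < (p.1:ℝ) ∧ (p.1:ℝ) < (p.2:ℝ)
    · obtain ⟨k, h1, h2, h3⟩ := hD2 p.1 p.2 hp.1 hp.2
      exact ⟨k, h1, h2, fun n hn _ _ => h3 n hn⟩
    · refine ⟨fun _ => 0, fun n => by norm_num, by simpa using hone, fun n hn h1 h2 => ?_⟩
      exact absurd ⟨h1, h2⟩ hp
  choose k hk01 hkns hkae using H2ex
  have hae2 : ∀ᵐ ω ∂μ, ∀ p : ℚ × ℚ, ∀ n : ℕ, 1 ≤ n → 0 < (p.1:ℝ) → (p.1:ℝ) < (p.2:ℝ) →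
      (((p.1:ℝ) < |X (n-1) ω| ∧ |X (n-1) ω| < (p.2:ℝ)) →
        0 ≤ (μ[X n | ℱ (n-1)]) ω / X (n-1) ω ∧
          (μ[X n | ℱ (n-1)]) ω / X (n-1) ω ≤ k p n) := by
    rw [ae_all_iff]
    intro p
    rw [ae_all_iff]
    intro n
    by_cases hn : 1 ≤ n
    · by_cases hp : 0 < (p.1:ℝ) ∧ (p.1:ℝ) < (p.2:ℝ)
      · filter_upwards [hkae p n hn hp.1 hp.2] with ω h _ _ _
        exact h
      · filter_upwards with ω _ h1 h2
        exact absurd ⟨h1, h2⟩ hp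
    · filter_upwards with ω hn'
      exact absurd hn' hn
  -- (D4) data
  have hae4 : ∀ᵐ ω ∂μ, ∀ q : ℚ, ∀ n : ℕ, 1 ≤ n → 0 < (q:ℝ) →
      ((0 < |X (n-1) ω| ∧ |X (n-1) ω| ≤ (q:ℝ)) → |(μ[X n | ℱ (n-1)]) ω| ≤ κ q) := by
    rw [ae_all_iff]
    intro q
    rw [ae_all_iff]
    intro n
    by_cases hn : 1 ≤ n
    · by_cases hq : 0 < (q:ℝ)
      · filter_upwards [hD4 q hq n hn] with ω h _ _
        exact h
      · filter_upwards with ω _ hq'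
        exact absurd hq' hq
    · filter_upwards with ω hn'
      exact absurd hn' hn
  filter_upwards [hae1, hae2, hae4, hA3, hA4] with ω h1 h2 h4 h3 ha4
  refine det_main (fun n => X n ω) (fun n => (μ[X n | ℱ (n-1)]) ω) ?_ ?_ ?_ ?_ ?_
  · intro q hq
    refine ⟨α q, hα0 q, hαsum q, fun n hn hlt => ?_⟩
    exact h1 q n hn hq ⟨hlt, abs_pos.mp (lt_trans hq hlt)⟩
  · intro q1 q2 hq1 hq12
    exact ⟨k (q1, q2), hk01 (q1, q2), hkns (q1, q2),
      fun n hn ha hb => h2 (q1, q2) n hn hq1 hq12 ⟨ha, hb⟩⟩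
  · intro ε hε
    have hmem : κ ⁻¹' Set.Iio ε ∈ 𝓝[>] (0:ℝ) := hκ (Iio_mem_nhds hε)
    rw [mem_nhdsGT_iff_exists_Ioc_subset] at hmem
    obtain ⟨u, hu, hsub⟩ := hmem
    obtain ⟨q, hq1, hq2⟩ := exists_rat_btwn (lt_min hu hε)
    have hq1' : 0 < (q:ℝ) := hq1
    have hκq : κ q < ε := hsub ⟨hq1', le_of_lt (lt_of_lt_of_le hq2 (min_le_left _ _))⟩
    exact ⟨q, hq1', lt_of_lt_of_le hq2 (min_le_right _ _),
      fun n hn h0 hle => le_trans (h4 q n hn hq1' ⟨h0, hle⟩) hκq.le⟩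
  · exact h3
  · exact ha4
end

section
/- Suppose assumptions (B1), (B2), (B4), (B5), (B6), (B7) hold for the stochastic approximation process X_n = X_{n−1} − α_n U_n with root x* = 0, and suppose that instead of a two-sided linear envelope the mapping g satisfies Blum's conditions (C1), (C2), (C3). Then X_n converges to 0 almost everywhere. -/
open Filter Topology

/-- If `s` has the same sign as `z` and `|s| ≤ |z|`, then `|z - s| ≤ |z|`. -/
lemma abs_sub_le_of_sign {z s : ℝ} (h1 : 0 < z → 0 ≤ s) (h2 : z < 0 → s ≤ 0)
    (h3 : |s| ≤ |z|) : |z - s| ≤ |z| := by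
  rcases lt_trichotomy z 0 with h | h | h
  · have hs := h2 h
    rw [abs_of_nonpos hs, abs_of_neg h] at h3
    rw [abs_of_neg h, abs_of_nonpos (by linarith)]
    linarith
  · subst h
    simp only [abs_zero] at h3 ⊢
    have hs0 : s = 0 := abs_eq_zero.mp (le_antisymm h3 (abs_nonneg s))
    simp [hs0]
  · have hs := h1 h
    rw [abs_of_nonneg hs, abs_of_pos h] at h3
    rw [abs_of_pos h, abs_of_nonneg (by linarith)]
    linarith

set_option maxHeartbeats 1000000 in
/-- Deterministic core of Blum's theorem. -/
lemma det_conv_s11 (g : ℝ → ℝ) (Eg : Set ℝ) (c d : ℝ) (hc : 0 ≤ c) (hd : 0 ≤ d)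
    (hC1 : ∀ x ∈ Eg, |g x| ≤ c + d * |x|)
    (hC2 : ∀ x ∈ Eg, (x < 0 → g x < 0) ∧ (0 < x → 0 < g x))
    (hC3 : ∀ δ₁ δ₂ : ℝ, 0 < δ₁ → δ₁ < δ₂ →
      ∃ ε > (0 : ℝ), ∀ x ∈ Eg, δ₁ ≤ |x| → |x| ≤ δ₂ → ε ≤ |g x|)
    (α : ℕ → ℝ) (hα0 : ∀ n, 0 ≤ α n) (hαlim : Tendsto α atTop (𝓝 0))
    (hdiv : Tendsto (fun n => ∑ i ∈ Finset.range n, α i) atTop atTop)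
    (x δ : ℕ → ℝ) (hδ : Tendsto δ atTop (𝓝 0))
    (hmem : ∀ n, 1 ≤ n → x n ∈ Eg)
    (hrec : ∀ n, 1 ≤ n → x n - δ n = (x (n-1) - δ (n-1)) - α n * g (x (n-1))) :
    Tendsto x atTop (𝓝 0) := by
  set z : ℕ → ℝ := fun n => x n - δ n with hz
  have hrec' : ∀ n, z (n+1) = z n - α (n+1) * g (x n) := by
    intro n
    have h := hrec (n+1) (by omega)
    simpa using h
  have hcd : (0:ℝ) < 2*(c+d+1) := by linarith
  set a1 : ℝ := (2*(c+d+1))⁻¹ with ha1def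
  have ha1pos : 0 < a1 := inv_pos.mpr hcd
  have ha1 : a1 * (2*(c+d+1)) = 1 := inv_mul_cancel₀ (ne_of_gt hcd)
  obtain ⟨Na, hNa⟩ := Metric.tendsto_atTop.mp hαlim a1 ha1pos
  obtain ⟨Nd, hNd⟩ := Metric.tendsto_atTop.mp hδ 1 one_pos
  set N1 : ℕ := max (max Na Nd) 1 with hN1def
  have hN1a : ∀ n, N1 ≤ n → α n < a1 := by
    intro n hn
    have := hNa n (le_trans (le_trans (le_max_left _ _) (le_max_left _ _)) hn)
    rw [Real.dist_eq, sub_zero, abs_of_nonneg (hα0 n)] at this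
    exact this
  have hN1d : ∀ n, N1 ≤ n → |δ n| ≤ 1 := by
    intro n hn
    have := hNd n (le_trans (le_trans (le_max_right _ _) (le_max_left _ _)) hn)
    rw [Real.dist_eq, sub_zero] at this
    exact this.le
  have hN11 : 1 ≤ N1 := le_max_right _ _
  set B : ℝ := max (|z N1|) 4 with hBdef
  have hB4 : (4:ℝ) ≤ B := le_max_right _ _
  -- Step A: boundedness
  have hbound : ∀ n, N1 ≤ n → |z n| ≤ B := by
    intro n hn
    induction n, hn using Nat.le_induction with
    | base => exact le_max_left _ _
    | succ n hn ih =>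
      have hx : x n ∈ Eg := hmem n (le_trans hN11 hn)
      have hxz : x n = z n + δ n := by simp [hz]
      have hδn := hN1d n hn
      have hxb : |x n| ≤ |z n| + 1 := by
        rw [hxz]; calc |z n + δ n| ≤ |z n| + |δ n| := abs_add_le _ _
          _ ≤ |z n| + 1 := by linarith
      have hαn : α (n+1) < a1 := hN1a (n+1) (by omega)
      have hgb : |g (x n)| ≤ c + d * |x n| := hC1 _ hx
      have hsabs : |α (n+1) * g (x n)| = α (n+1) * |g (x n)| := by
        rw [abs_mul, abs_of_nonneg (hα0 _)]
      have hprod : a1 * c ≥ 0 := mul_nonneg ha1pos.le hc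
      have hprod2 : a1 * d ≥ 0 := mul_nonneg ha1pos.le hd
      have ha1e : 2*(a1*c) + 2*(a1*d) + 2*a1 = 1 := by nlinarith [ha1]
      rcases le_or_gt (|z n|) 2 with h2 | h2
      · -- small case
        have hgb3 : |g (x n)| ≤ c + 3*d := by nlinarith [abs_nonneg (x n)]
        have hs : |α (n+1) * g (x n)| ≤ 3/2 := by
          rw [hsabs]
          have h1 : α (n+1) * |g (x n)| ≤ a1 * (c + 3*d) :=
            mul_le_mul hαn.le hgb3 (abs_nonneg _) ha1pos.le
          have h2' : a1 * (c + 3*d) ≤ 3/2 := by nlinarith [ha1e]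
          linarith
        have hupper : |z (n+1)| ≤ |z n| + |α (n+1) * g (x n)| := by
          rw [hrec' n]; exact abs_sub _ _
        linarith
      · -- big case: signed step, no overshoot
        have hzx_sign_pos : 0 < z n → 0 < x n := by
          intro hp
          have : 2 < z n := by rwa [abs_of_pos hp] at h2
          rw [hxz]; cases abs_le.mp hδn; linarith
        have hzx_sign_neg : z n < 0 → x n < 0 := by
          intro hp
          have : 2 < -(z n) := by rwa [abs_of_neg hp] at h2
          rw [hxz]; cases abs_le.mp hδn; linarith
        have hs_le : |α (n+1) * g (x n)| ≤ |z n| := by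
          rw [hsabs]
          have hg2 : |g (x n)| ≤ c + d * (|z n| + 1) := by nlinarith [hgb, hxb, hd]
          have h1 : α (n+1) * |g (x n)| ≤ a1 * (c + d * (|z n| + 1)) :=
            mul_le_mul hαn.le hg2 (abs_nonneg _) ha1pos.le
          have had : a1 * d ≤ 1/2 := by linarith [ha1e, ha1pos.le]
          have hmul : (a1 * d) * |z n| ≤ (1/2) * |z n| :=
            mul_le_mul_of_nonneg_right had (abs_nonneg _)
          have h2' : a1 * (c + d * (|z n| + 1)) ≤ 1/2 + |z n|/2 := by nlinarith [ha1e, ha1pos.le, hmul]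
          linarith
        have key : |z (n+1)| ≤ |z n| := by
          rw [hrec' n]
          apply abs_sub_le_of_sign
          · intro hp
            have hxp := hzx_sign_pos hp
            exact mul_nonneg (hα0 _) (le_of_lt ((hC2 _ hx).2 hxp))
          · intro hp
            have hxp := hzx_sign_neg hp
            exact mul_nonpos_of_nonneg_of_nonpos (hα0 _) (le_of_lt ((hC2 _ hx).1 hxp))
          · exact hs_le
        linarith
  have hxbound : ∀ n, N1 ≤ n → |x n| ≤ B + 1 := by
    intro n hn
    have hxz : x n = z n + δ n := by simp [hz]
    rw [hxz]
    calc |z n + δ n| ≤ |z n| + |δ n| := abs_add_le _ _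
      _ ≤ B + 1 := add_le_add (hbound n hn) (hN1d n hn)
  -- Key claim: for every ε > 0, eventually |z n| ≤ 2ε
  have key : ∀ ε : ℝ, 0 < ε → ∃ N, ∀ n, N ≤ n → |z n| ≤ 2*ε := by
    intro ε hε
    rcases le_or_gt (B + 1) (ε/2) with hcase | hcase
    · exact ⟨N1, fun n hn => le_trans (hbound n hn) (by linarith)⟩
    obtain ⟨ε', hε'pos, hε'⟩ := hC3 (ε/2) (B+1) (half_pos hε) hcase
    set K : ℝ := c + d*(B+1) + 1 with hKdef
    have hdB : 0 ≤ d*(B+1) := mul_nonneg hd (by linarith)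
    have hK1 : (1:ℝ) ≤ K := by simp only [hKdef]; linarith
    have hKpos : (0:ℝ) < K := by linarith
    obtain ⟨Nb, hNb⟩ := Metric.tendsto_atTop.mp hαlim (ε/K) (div_pos hε hKpos)
    obtain ⟨Nc, hNc⟩ := Metric.tendsto_atTop.mp hδ (ε/2) (half_pos hε)
    set N2 : ℕ := max (max Nb Nc) N1 with hN2def
    have hN2b : ∀ n, N2 ≤ n → α n ≤ ε/K := by
      intro n hn
      have := hNb n (le_trans (le_trans (le_max_left _ _) (le_max_left _ _)) hn)
      rw [Real.dist_eq, sub_zero, abs_of_nonneg (hα0 n)] at this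
      exact this.le
    have hN2c : ∀ n, N2 ≤ n → |δ n| ≤ ε/2 := by
      intro n hn
      have := hNc n (le_trans (le_trans (le_max_right _ _) (le_max_left _ _)) hn)
      rw [Real.dist_eq, sub_zero] at this
      exact this.le
    have hN21 : N1 ≤ N2 := le_max_right _ _
    have hgK : ∀ n, N2 ≤ n → |g (x n)| ≤ K - 1 := by
      intro n hn
      have hx : x n ∈ Eg := hmem n (le_trans hN11 (le_trans hN21 hn))
      have := hC1 _ hx
      have hxb := hxbound n (le_trans hN21 hn)
      nlinarith
    have hstepK : ∀ n, N2 ≤ n → |α (n+1) * g (x n)| ≤ ε := by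
      intro n hn
      rw [abs_mul, abs_of_nonneg (hα0 _)]
      have h1 := hN2b (n+1) (by omega)
      have h2 := hgK n hn
      have h3 : α (n+1) * |g (x n)| ≤ (ε/K) * K := by
        nlinarith [abs_nonneg (g (x n)), hα0 (n+1)]
      rw [div_mul_cancel₀ _ (ne_of_gt hKpos)] at h3
      exact h3
    -- per-step decrease when outside the ε-ball
    have hstep : ∀ n, N2 ≤ n → ε < |z n| → |z (n+1)| ≤ |z n| - α (n+1) * ε' := by
      intro n hn hout
      have hx : x n ∈ Eg := hmem n (le_trans hN11 (le_trans hN21 hn))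
      have hxz : x n = z n + δ n := by simp [hz]
      have hδn := hN2c n hn
      have hxub := hxbound n (le_trans hN21 hn)
      have hsK := hstepK n hn
      rcases lt_trichotomy (z n) 0 with hneg | hzero | hpos
      · have hzn : z n < -ε := by
          rw [abs_of_neg hneg] at hout; linarith
        have hxn : x n < -(ε/2) := by
          rw [hxz]; cases abs_le.mp hδn; linarith
        have hxlb : ε/2 ≤ |x n| := by rw [abs_of_neg (by linarith)]; linarith
        have hg := hε' _ hx hxlb hxub
        have hgneg : g (x n) < 0 := (hC2 _ hx).1 (by linarith)
        rw [abs_of_neg hgneg] at hg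
        have hzn1 : z (n+1) = z n - α (n+1) * g (x n) := hrec' n
        have hαε' : α (n+1) * ε' ≤ α (n+1) * (-(g (x n))) :=
          mul_le_mul_of_nonneg_left hg (hα0 _)
        have hsabs : |α (n+1) * g (x n)| = α (n+1) * (-(g (x n))) := by
          rw [abs_mul, abs_of_nonneg (hα0 _), abs_of_neg hgneg]
        have hz1neg : z (n+1) ≤ 0 := by
          rw [hzn1]
          have : α (n+1) * g (x n) ≥ -ε := by
            rw [hsabs] at hsK; linarith
          linarith
        rw [abs_of_nonpos hz1neg, abs_of_neg hneg, hzn1]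
        rw [hsabs] at hsK
        linarith
      · exfalso; rw [hzero] at hout; simp at hout; linarith
      · have hzn : ε < z n := by rwa [abs_of_pos hpos] at hout
        have hxn : ε/2 < x n := by
          rw [hxz]; cases abs_le.mp hδn; linarith
        have hxlb : ε/2 ≤ |x n| := by rw [abs_of_pos (by linarith)]; linarith
        have hg := hε' _ hx hxlb hxub
        have hgpos : 0 < g (x n) := (hC2 _ hx).2 (by linarith)
        rw [abs_of_pos hgpos] at hg
        have hzn1 : z (n+1) = z n - α (n+1) * g (x n) := hrec' n
        have hαε' : α (n+1) * ε' ≤ α (n+1) * g (x n) :=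
          mul_le_mul_of_nonneg_left hg (hα0 _)
        have hsabs : |α (n+1) * g (x n)| = α (n+1) * g (x n) := by
          rw [abs_mul, abs_of_nonneg (hα0 _), abs_of_pos hgpos]
        have hz1pos : 0 ≤ z (n+1) := by
          rw [hzn1]; rw [hsabs] at hsK; linarith
        rw [abs_of_nonneg hz1pos, abs_of_pos hpos, hzn1]
        linarith
    -- the sequence hits [-ε, ε]
    have hits : ∃ m, N2 ≤ m ∧ |z m| ≤ ε := by
      by_contra h
      push_neg at h
      have hdecr : ∀ n, N2 ≤ n →
          |z n| + ε' * (∑ i ∈ Finset.Ico (N2+1) (n+1), α i) ≤ |z N2| := by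
        intro n hn
        induction n, hn using Nat.le_induction with
        | base => simp
        | succ n hn ih =>
          have h1 := hstep n hn (h n hn)
          rw [Finset.sum_Ico_succ_top (by omega)]
          have : ε' * (∑ i ∈ Finset.Ico (N2+1) (n+1), α i + α (n+1))
              = ε' * (∑ i ∈ Finset.Ico (N2+1) (n+1), α i) + ε' * α (n+1) := by ring
          rw [this]
          nlinarith [hα0 (n+1)]
      obtain ⟨m, hm1, hm2⟩ := ((hdiv.eventually_ge_atTop
        (|z N2|/ε' + ∑ i ∈ Finset.range (N2+1), α i)).and
        (eventually_ge_atTop (N2+1))).exists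
      have hmm : m - 1 + 1 = m := by omega
      have hd1 := hdecr (m-1) (by omega)
      rw [hmm, Finset.sum_Ico_eq_sub _ hm2] at hd1
      have hsum : |z N2|/ε' ≤ ∑ i ∈ Finset.range m, α i - ∑ i ∈ Finset.range (N2+1), α i := by
        linarith
      have : |z N2| ≤ ε' * (∑ i ∈ Finset.range m, α i - ∑ i ∈ Finset.range (N2+1), α i) := by
        rw [div_le_iff₀ hε'pos] at hsum; linarith [mul_comm (|z N2|/ε') ε']
      have hcontr := h (m-1) (by omega)
      nlinarith [abs_nonneg (z (m-1))]
    -- once inside, it stays within 2ε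
    obtain ⟨m, hm, hzm⟩ := hits
    refine ⟨m, fun n hn => ?_⟩
    induction n, hn using Nat.le_induction with
    | base => linarith
    | succ n hn ih =>
      rcases le_or_gt (|z n|) ε with hin | hout
      · have h1 := hstepK n (le_trans hm hn)
        have : |z (n+1)| ≤ |z n| + |α (n+1) * g (x n)| := by
          rw [hrec' n]
          exact abs_sub _ _
        linarith
      · have h1 := hstep n (le_trans hm hn) hout
        have := mul_nonneg (hα0 (n+1)) (le_of_lt hε'pos)
        linarith
  -- conclude
  have hzlim : Tendsto z atTop (𝓝 0) := by
    rw [Metric.tendsto_atTop]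
    intro ε hε
    obtain ⟨N, hN⟩ := key (ε/3) (by linarith)
    refine ⟨N, fun n hn => ?_⟩
    rw [Real.dist_eq, sub_zero]
    have := hN n hn
    linarith
  have : Tendsto (fun n => z n + δ n) atTop (𝓝 (0 + 0)) := hzlim.add hδ
  simpa [hz] using this

open MeasureTheory

/-- Stochastic approximation under Blum's conditions: if (B1), (B2), (B4)-(B7)
hold with root `x* = 0`, and `g` satisfies (C1)-(C3), then `X_n → 0` a.e. -/
theorem stmt11 {Ω : Type*} {mΩ : MeasurableSpace Ω} {μ : Measure Ω} [IsProbabilityMeasure μ]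
    (ℱ : Filtration ℕ mΩ)
    (X : ℕ → Ω → ℝ) (U : ℕ → Ω → ℝ) (α : ℕ → ℝ)
    (g : ℝ → ℝ) (Eg : Set ℝ)
    (hadpt : Adapted ℱ X)
    (hUmeas : ∀ n, 1 ≤ n → StronglyMeasurable[ℱ n] (U n))
    (hUint : ∀ n, 1 ≤ n → Integrable (U n) μ)
    -- the algorithm
    (halg : ∀ n, 1 ≤ n → ∀ ω, X n ω = X (n - 1) ω - α n * U n ω)
    -- (B1) with root x* = 0
    (hB1 : (0 : ℝ) ∈ Eg ∧ g 0 = 0)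
    -- (B2)
    (hB2 : ∀ n, 1 ≤ n → ∀ᵐ ω ∂μ, X n ω ∈ Eg)
    -- (B4)
    (hα0 : ∀ n, 0 ≤ α n) (hαlim : Tendsto α atTop (𝓝 0))
    -- (B5)
    (hB5 : ∀ᵐ ω ∂μ, ∃ L : ℝ, Tendsto
      (fun N => ∑ i ∈ Finset.Icc 1 N, α i * (U i ω - (μ[U i | ℱ (i - 1)]) ω))
      atTop (𝓝 L))
    -- (B6)
    (hB6 : ¬ Summable α)
    -- (B7)
    (hB7 : ∀ n, 1 ≤ n → (μ[U n | ℱ (n - 1)]) =ᵐ[μ] fun ω => g (X (n - 1) ω))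
    -- (C1)
    (c d : ℝ) (hc : 0 ≤ c) (hd : 0 ≤ d)
    (hC1 : ∀ x ∈ Eg, |g x| ≤ c + d * |x|)
    -- (C2)
    (hC2 : ∀ x ∈ Eg, (x < 0 → g x < 0) ∧ (0 < x → 0 < g x))
    -- (C3)
    (hC3 : ∀ δ₁ δ₂ : ℝ, 0 < δ₁ → δ₁ < δ₂ →
      ∃ ε > (0 : ℝ), ∀ x ∈ Eg, δ₁ ≤ |x| → |x| ≤ δ₂ → ε ≤ |g x|) :
    ∀ᵐ ω ∂μ, Tendsto (fun n => X n ω) atTop (𝓝 0) := by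
  have hdiv : Tendsto (fun n => ∑ i ∈ Finset.range n, α i) atTop atTop :=
    (not_summable_iff_tendsto_nat_atTop_of_nonneg hα0).mp hB6
  have hmem : ∀ᵐ ω ∂μ, ∀ n : ℕ, X (n+1) ω ∈ Eg :=
    ae_all_iff.mpr fun n => hB2 (n+1) (by omega)
  have hce : ∀ᵐ ω ∂μ, ∀ n : ℕ, (μ[U (n+1) | ℱ n]) ω = g (X n ω) :=
    ae_all_iff.mpr fun n => by
      have h := hB7 (n+1) (by omega); simp only [Nat.add_sub_cancel] at h; exact h
  filter_upwards [hmem, hce, hB5] with ω hmemω hceω hLω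
  obtain ⟨L, hL⟩ := hLω
  set s : ℕ → ℝ := fun N => ∑ i ∈ Finset.Icc 1 N, α i * (U i ω - g (X (i-1) ω)) with hsdef
  have hseq : ∀ N, s N = ∑ i ∈ Finset.Icc 1 N, α i * (U i ω - (μ[U i | ℱ (i - 1)]) ω) := by
    intro N
    apply Finset.sum_congr rfl
    intro i hi
    have hi1 : 1 ≤ i := (Finset.mem_Icc.mp hi).1
    have h := hceω (i-1)
    rw [show i - 1 + 1 = i from by omega] at h
    rw [h]
  have hLs : Tendsto s atTop (𝓝 L) := by
    apply hL.congr
    intro N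
    exact (hseq N).symm
  apply det_conv_s11 g Eg c d hc hd hC1 hC2 hC3 α hα0 hαlim hdiv (fun n => X n ω)
    (fun n => L - s n)
  · have : Tendsto (fun n => L - s n) atTop (𝓝 (L - L)) := tendsto_const_nhds.sub hLs
    simpa using this
  · intro n hn
    have h := hmemω (n-1)
    rwa [show n - 1 + 1 = n from by omega] at h
  · intro n hn
    obtain ⟨m, rfl⟩ : ∃ m, n = m + 1 := ⟨n-1, by omega⟩
    simp only [Nat.add_sub_cancel]
    have hsplit : s (m+1) = s m + α (m+1) * (U (m+1) ω - g (X m ω)) :=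
      Finset.sum_Icc_succ_top (by omega) _
    have halg' := halg (m+1) (by omega) ω
    simp only [Nat.add_sub_cancel] at halg'
    rw [hsplit, halg']
    ring
end
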